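/- arXiv:2311.14868 — 5 statements merged into one kernel-verified Lean document; each statement's English description precedes it below -/
import Mathlib

section
/- Fix an integer k ≥ 1. If a : ℕ → ℝ is a Stieltjes moment sequence, then L_k(a) is also a Stieltjes moment sequence. -/
/-!
Heine's formula writes a Hankel determinant of moments as an integral over `k` independent
copies of the measure:
`det (∫ t ^ (n+i+j) dμ) = (k!)⁻¹ ∫ V(x)² (x₀ ⋯ x_{k-1}) ^ n dμ^k`, where `V` is the Vandermonde
determinant. Hence `L_k(a)(n)` is `a₀ ^ k / k!` times the `n`-th moment of the image of the finite
measure `V² dμ^k` under `x ↦ ∏ xᵢ`, which lives on `[0, ∞)`; normalising it gives the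
representing probability measure.
-/

open MeasureTheory

/-- `a` is a Stieltjes moment sequence: `a 0 ≥ 0` and there is a Borel probability
measure on `ℝ` supported on `[0, ∞)` with all moments finite such that
`a n = a 0 * ∫ x ^ n ∂μ` for all `n`. -/
def IsSM (a : ℕ → ℝ) : Prop :=
  0 ≤ a 0 ∧ ∃ μ : Measure ℝ, IsProbabilityMeasure μ ∧
    μ (Set.Iio (0 : ℝ)) = 0 ∧
    (∀ n : ℕ, Integrable (fun x => x ^ n) μ) ∧
    (∀ n : ℕ, a n = a 0 * ∫ x, x ^ n ∂μ)

/-- The operator `L_k`: `L_k(a)(n) = det (a (n+i+j))_{0 ≤ i,j ≤ k-1}`. -/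
def Lk (k : ℕ) (a : ℕ → ℝ) : ℕ → ℝ :=
  fun n => Matrix.det (Matrix.of fun i j : Fin k => a (n + (i : ℕ) + (j : ℕ)))

open Finset Matrix
open scoped Nat

lemma IsSM.const_mul {a : ℕ → ℝ} (ha : IsSM a) {c : ℝ} (hc : 0 ≤ c) :
    IsSM fun n => c * a n := by
  obtain ⟨ha0, μ, hμ, hsupp, hint, hmom⟩ := ha
  exact ⟨mul_nonneg hc ha0, μ, hμ, hsupp, hint, fun n => by simp only [hmom n]; ring⟩

lemma isSM_zero : IsSM fun _ => 0 :=
  ⟨le_rfl, Measure.dirac 0, inferInstance, by simp, fun _ => integrable_dirac (by simp),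
    fun _ => by simp⟩

lemma isSM_integral_pow (ρ : Measure ℝ) [IsFiniteMeasure ρ] (hsupp : ρ (Set.Iio 0) = 0)
    (hint : ∀ n : ℕ, Integrable (fun x => x ^ n) ρ) :
    IsSM fun n => ∫ x, x ^ n ∂ρ := by
  rcases eq_zero_or_neZero ρ with rfl | hρ
  · simpa using isSM_zero
  have := measureReal_univ_ne_zero (μ := ρ)
  refine ⟨by simp, (ρ Set.univ)⁻¹ • ρ, inferInstance, by simp [hsupp],
    fun n => (hint n).smul_measure (by simp [hρ.out]), fun n => ?_⟩
  simp only [integral_smul_measure, ENNReal.toReal_inv, ← measureReal_def, pow_zero,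
    integral_const, smul_eq_mul, mul_one]
  field_simp

lemma isSM_integral_mul_pow {α : Type*} [MeasurableSpace α] (m : Measure α) {g f : α → ℝ}
    (hg : Measurable g) (hf : Measurable f) (hg0 : 0 ≤ g) (hf0 : ∀ᵐ x ∂m, 0 ≤ f x)
    (hint : ∀ n : ℕ, Integrable (fun x => g x * f x ^ n) m) :
    IsSM fun n => ∫ x, g x * f x ^ n ∂m := by
  have hdens : Measurable fun x => ENNReal.ofReal (g x) := hg.ennreal_ofReal
  have hg' : ∀ x, (ENNReal.ofReal (g x)).toReal = g x := fun x => ENNReal.toReal_ofReal (hg0 x)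
  have : IsFiniteMeasure (m.withDensity fun x => ENNReal.ofReal (g x)) :=
    isFiniteMeasure_withDensity_ofReal (by simpa using (hint 0).hasFiniteIntegral)
  set ρ := (m.withDensity fun x => ENNReal.ofReal (g x)).map f
  have hρ : ∀ n : ℕ, ∫ t, t ^ n ∂ρ = ∫ x, g x * f x ^ n ∂m := fun n => by
    rw [integral_map hf.aemeasurable (by fun_prop),
      integral_withDensity_eq_integral_toReal_smul hdens (by simp)]
    simp [hg']
  simp_rw [← hρ]
  refine isSM_integral_pow ρ ?_ fun n => ?_
  · rw [Measure.map_apply hf measurableSet_Iio]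
    refine withDensity_absolutelyContinuous _ _ ?_
    simpa [ae_iff, Set.preimage] using hf0
  · rw [integrable_map_measure (by fun_prop) hf.aemeasurable,
      integrable_withDensity_iff_integrable_smul' hdens (by simp)]
    simpa [hg'] using hint n

namespace Matrix

variable {R : Type*} [CommRing R] {k : ℕ}

lemma det_vandermonde_eq_sum_prod_pow (x : Fin k → R) :
    (vandermonde x).det = ∑ σ : Equiv.Perm (Fin k),
      ((Equiv.Perm.sign σ : ℤ) : R) * ∏ i, x i ^ (σ i : ℕ) := by
  rw [← det_transpose, det_apply']
  simp [vandermonde]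

lemma det_vandermonde_eq_sum_prod_comp (x : Fin k → R) :
    (vandermonde x).det = ∑ σ : Equiv.Perm (Fin k),
      ((Equiv.Perm.sign σ : ℤ) : R) * ∏ i, x (σ i) ^ (i : ℕ) := by
  rw [det_apply']
  simp [vandermonde]

lemma det_vandermonde_comp_perm (x : Fin k → R) (τ : Equiv.Perm (Fin k)) :
    (vandermonde (x ∘ τ)).det = ((Equiv.Perm.sign τ : ℤ) : R) * (vandermonde x).det := by
  rw [show vandermonde (x ∘ τ) = (vandermonde x).submatrix τ id from rfl, det_permute]

lemma sum_perm_prod_pow_mul_det_vandermonde (x : Fin k → R) (n : ℕ) :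
    ∑ τ : Equiv.Perm (Fin k), (∏ i, x (τ i) ^ (n + (i : ℕ))) * (vandermonde (x ∘ τ)).det =
      (∏ i, x i ^ n) * (vandermonde x).det ^ 2 := by
  have hτ : ∀ τ : Equiv.Perm (Fin k),
      (∏ i, x (τ i) ^ (n + (i : ℕ))) * (vandermonde (x ∘ τ)).det =
        (∏ i, x i ^ n) * (vandermonde x).det *
          (((Equiv.Perm.sign τ : ℤ) : R) * ∏ i, x (τ i) ^ (i : ℕ)) := fun τ => by
    rw [det_vandermonde_comp_perm]
    simp only [pow_add, prod_mul_distrib, Equiv.prod_comp τ fun i => x i ^ n]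
    ring
  rw [sum_congr rfl fun τ _ => hτ τ, ← mul_sum, ← det_vandermonde_eq_sum_prod_comp]
  ring

lemma continuous_det_vandermonde [TopologicalSpace R] [IsTopologicalRing R] :
    Continuous fun x : Fin k → R => (vandermonde x).det := by
  unfold vandermonde
  fun_prop

end Matrix

lemma MvPolynomial.eval_det_vandermonde_X {R : Type*} [CommRing R] {k : ℕ} (x : Fin k → R) :
    eval x (vandermonde X).det = (vandermonde x).det := by
  rw [RingHom.map_det]
  congr 1
  ext i j
  simp [vandermonde]

section ProductMeasure

variable {ι α : Type*} [Fintype ι] [MeasurableSpace α] {μ : Measure α} [SigmaFinite μ]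

lemma measurePreserving_comp_perm (τ : Equiv.Perm ι) :
    MeasurePreserving (fun x : ι → α => x ∘ τ) (Measure.pi fun _ => μ) (Measure.pi fun _ => μ) :=
  measurePreserving_arrowCongr' (fun _ => μ) (fun _ => μ) τ.symm (.refl α) fun _ => .id μ

lemma integral_comp_perm (g : (ι → α) → ℝ) (τ : Equiv.Perm ι) :
    ∫ x, g (x ∘ τ) ∂(Measure.pi fun _ => μ) = ∫ x, g x ∂(Measure.pi fun _ => μ) :=
  (measurePreserving_comp_perm τ).integral_comp
    (MeasurableEquiv.arrowCongr' τ.symm (.refl α)).measurableEmbedding g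

end ProductMeasure

lemma MvPolynomial.integrable_eval_pi {ι : Type*} [Fintype ι] {μ : Measure ℝ} [SigmaFinite μ]
    (hint : ∀ n : ℕ, Integrable (fun t => t ^ n) μ) (p : MvPolynomial ι ℝ) :
    Integrable (fun x => eval x p) (Measure.pi fun _ => μ) := by
  induction p using MvPolynomial.induction_on' with
  | monomial u c =>
    simp only [eval_monomial, Finsupp.prod_pow]
    exact (Integrable.fintype_prod fun i => hint (u i)).const_mul c
  | add p q hp hq =>
    simp only [map_add]
    exact hp.add hq

section Heine

variable {k : ℕ} {μ : Measure ℝ} [SigmaFinite μ]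

lemma det_moments_eq_integral (hint : ∀ n : ℕ, Integrable (fun t => t ^ n) μ) (n : ℕ) :
    (of fun i j : Fin k => ∫ t, t ^ (n + (i : ℕ) + (j : ℕ)) ∂μ).det =
      ∫ x : Fin k → ℝ, (∏ i, x i ^ (n + (i : ℕ))) * (vandermonde x).det
        ∂(Measure.pi fun _ => μ) := by
  have hterm : ∀ (σ : Equiv.Perm (Fin k)) (x : Fin k → ℝ),
      (∏ i, x i ^ (n + (i : ℕ))) * (((Equiv.Perm.sign σ : ℤ) : ℝ) * ∏ i, x i ^ (σ i : ℕ)) =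
        ((Equiv.Perm.sign σ : ℤ) : ℝ) * ∏ i, x i ^ (n + (σ i : ℕ) + (i : ℕ)) := fun σ x => by
    rw [mul_left_comm, ← prod_mul_distrib]
    simp only [← pow_add, add_right_comm]
  simp_rw [det_vandermonde_eq_sum_prod_pow, mul_sum, hterm]
  rw [det_apply', integral_finsetSum _ fun σ _ =>
    (Integrable.fintype_prod fun i => hint _).const_mul _]
  refine sum_congr rfl fun σ _ => ?_
  rw [integral_const_mul,
    integral_fintype_prod_eq_prod fun i (t : ℝ) => t ^ (n + (σ i : ℕ) + (i : ℕ))]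
  rfl

lemma integral_prod_pow_mul_det_vandermonde (hint : ∀ n : ℕ, Integrable (fun t => t ^ n) μ)
    (n : ℕ) :
    (k ! : ℝ) * ∫ x : Fin k → ℝ, (∏ i, x i ^ (n + (i : ℕ))) * (vandermonde x).det
        ∂(Measure.pi fun _ => μ) =
      ∫ x : Fin k → ℝ, (∏ i, x i ^ n) * (vandermonde x).det ^ 2 ∂(Measure.pi fun _ => μ) := by
  set g : (Fin k → ℝ) → ℝ := fun x => (∏ i, x i ^ (n + (i : ℕ))) * (vandermonde x).det
  have hg : Integrable g (Measure.pi fun _ => μ) := by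
    have := MvPolynomial.integrable_eval_pi hint
      ((∏ i : Fin k, MvPolynomial.X i ^ (n + (i : ℕ))) * (vandermonde MvPolynomial.X).det)
    simpa only [map_mul, map_prod, map_pow, MvPolynomial.eval_X,
      MvPolynomial.eval_det_vandermonde_X] using this
  calc (k ! : ℝ) * ∫ x, g x ∂(Measure.pi fun _ => μ)
      = ∑ τ : Equiv.Perm (Fin k), ∫ x, g (x ∘ τ) ∂(Measure.pi fun _ => μ) := by
        simp [integral_comp_perm, Fintype.card_perm]
    _ = ∫ x, ∑ τ : Equiv.Perm (Fin k), g (x ∘ τ) ∂(Measure.pi fun _ => μ) :=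
        (integral_finsetSum _ fun τ _ =>
          (measurePreserving_comp_perm τ).integrable_comp_of_integrable hg).symm
    _ = _ := by simp only [g, Function.comp_apply, sum_perm_prod_pow_mul_det_vandermonde]

lemma integrable_det_vandermonde_sq_mul_prod_pow
    (hint : ∀ n : ℕ, Integrable (fun t => t ^ n) μ) (n : ℕ) :
    Integrable (fun x : Fin k → ℝ => (vandermonde x).det ^ 2 * (∏ i, x i) ^ n)
      (Measure.pi fun _ => μ) := by
  have := MvPolynomial.integrable_eval_pi hint
    ((vandermonde MvPolynomial.X).det ^ 2 * (∏ i : Fin k, MvPolynomial.X i) ^ n)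
  simpa only [map_mul, map_prod, map_pow, MvPolynomial.eval_X,
    MvPolynomial.eval_det_vandermonde_X] using this

theorem det_moments_eq_integral_det_vandermonde_sq
    (hint : ∀ n : ℕ, Integrable (fun t => t ^ n) μ) (n : ℕ) :
    (of fun i j : Fin k => ∫ t, t ^ (n + (i : ℕ) + (j : ℕ)) ∂μ).det =
      (k ! : ℝ)⁻¹ * ∫ x : Fin k → ℝ, (vandermonde x).det ^ 2 * (∏ i, x i) ^ n
        ∂(Measure.pi fun _ => μ) := by
  rw [det_moments_eq_integral hint, eq_inv_mul_iff_mul_eq₀ (by positivity),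
    integral_prod_pow_mul_det_vandermonde hint]
  simp_rw [prod_pow, mul_comm]

end Heine

lemma Lk_eq_pow_mul_det_moments {k : ℕ} {a : ℕ → ℝ} {μ : Measure ℝ}
    (hmom : ∀ n : ℕ, a n = a 0 * ∫ x, x ^ n ∂μ) (n : ℕ) :
    Lk k a n = a 0 ^ k * (of fun i j : Fin k => ∫ t, t ^ (n + (i : ℕ) + (j : ℕ)) ∂μ).det := by
  have hmat : (of fun i j : Fin k => a (n + (i : ℕ) + (j : ℕ))) =
      a 0 • of fun i j : Fin k => ∫ t, t ^ (n + (i : ℕ) + (j : ℕ)) ∂μ := by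
    ext i j
    exact hmom _
  rw [Lk, hmat, det_smul, Fintype.card_fin]

theorem stmt0_general (k : ℕ) (a : ℕ → ℝ) (ha : IsSM a) : IsSM (Lk k a) := by
  obtain ⟨ha0, μ, hμ, hsupp, hint, hmom⟩ := ha
  have hμ0 : ∀ᵐ t ∂μ, 0 ≤ t := ae_iff.2 (measure_mono_null (fun t ht => not_le.1 ht) hsupp)
  have hprod : ∀ᵐ x ∂(Measure.pi fun _ : Fin k => μ), 0 ≤ ∏ i, x i := by
    filter_upwards [Measure.ae_le_pi fun _ => hμ0] with x hx using prod_nonneg fun i _ => hx i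
  have hLk : Lk k a = fun n => a 0 ^ k / k ! *
      ∫ x : Fin k → ℝ, (vandermonde x).det ^ 2 * (∏ i, x i) ^ n ∂(Measure.pi fun _ => μ) := by
    funext n
    rw [Lk_eq_pow_mul_det_moments hmom, det_moments_eq_integral_det_vandermonde_sq hint]
    ring
  rw [hLk]
  exact (isSM_integral_mul_pow _ (continuous_det_vandermonde.measurable.pow_const 2)
    (by fun_prop) (fun x => sq_nonneg _) hprod
    (integrable_det_vandermonde_sq_mul_prod_pow hint)).const_mul (by positivity)

/-- If `a` is a Stieltjes moment sequence, then so is `L_k a`. -/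
theorem stmt0 (k : ℕ) (hk : 1 ≤ k) (a : ℕ → ℝ) (ha : IsSM a) : IsSM (Lk k a) :=
  stmt0_general k a ha
end

section
/- Let G be an undirected, locally finite, bipartite simple graph, let v be a vertex of G, and let w be a real-valued weight function on the edges of G. For each n ∈ ℕ let a(n) be the sum, over all closed walks of length 2n in G starting and ending at v, of the product of the edge weights traversed (with multiplicity; the empty walk has weight 1). Then the sequence (a(n))_{n∈ℕ} is path-enumerable. -/
/-- The set of closed walks of length `2n` in the path graph on `ℕ`
(vertices `m`, `m'` adjacent iff `|m - m'| = 1`) starting and ending at vertex `0`,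
encoded as sequences of `2n + 1` vertices. -/
def closedWalks0 (n : ℕ) : Set (Fin (2 * n + 1) → ℕ) :=
  {f | f 0 = 0 ∧ f (Fin.last (2 * n)) = 0 ∧
    ∀ i : Fin (2 * n), f i.succ = f i.castSucc + 1 ∨ f i.castSucc = f i.succ + 1}

/-- The weight of a walk in the path graph on `ℕ`, where the edge `{m, m+1}` has
weight `w (m+1)`: the product of the edge weights traversed, with multiplicity. -/
def walkWeight (w : ℕ → ℝ) (n : ℕ) (f : Fin (2 * n + 1) → ℕ) : ℝ :=
  ∏ i : Fin (2 * n), w (max (f i.castSucc) (f i.succ))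

/-- `a` is path-enumerable: `a 0 ≥ 0` and there are edge weights `w` on the path
graph on `ℕ` such that `a n` is `a 0` times the weighted sum over all closed walks
of length `2n` starting at `0`. -/
def IsPathEnum (a : ℕ → ℝ) : Prop :=
  0 ≤ a 0 ∧ ∃ w : ℕ → ℝ, ∀ n : ℕ, a n = a 0 * ∑ᶠ f ∈ closedWalks0 n, walkWeight w n f

/-! The closed-walk sums are the moments `⟪A ^ 2n δ_v, δ_v⟫` of the weighted adjacency operator
`A` on finitely supported functions, which is symmetric for the dot product. The Lanczos process
started at `δ_v` yields vectors `e k`, orthonormal until the process breaks down and zero afterwards,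
with `A (e k) = b (k + 1) • e (k + 1) + b k • e (k - 1)`. There is no diagonal term because `G` is
bipartite: `e k` is supported on one colour class and `A (e k)` on the other. Hence `A` acts on the
span of the `e k` as the weighted adjacency operator `J` of the path on `ℕ` with edge weights `b`,
and `⟪A ^ m δ_v, δ_v⟫ = (J ^ m δ_0) 0` is the weighted sum over closed walks at `0` in the path. -/

open Finsupp

noncomputable section

section WalkProd

variable {V : Type*} (w : V → V → ℝ)

def walkProd {m : ℕ} (f : Fin (m + 1) → V) : ℝ :=
  ∏ i : Fin m, w (f i.castSucc) (f i.succ)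

theorem walkProd_snoc {m : ℕ} (f : Fin (m + 1) → V) (u : V) :
    walkProd w (Fin.snoc f u : Fin (m + 2) → V) = walkProd w f * w (f (Fin.last m)) u := by
  simp only [walkProd, Fin.prod_univ_castSucc, Fin.succ_castSucc, Fin.snoc_castSucc, Fin.succ_last,
    Fin.snoc_last]

end WalkProd

namespace Finsupp

variable {V : Type*}

def dot : (V →₀ ℝ) →ₗ[ℝ] (V →₀ ℝ) →ₗ[ℝ] ℝ :=
  linearCombination ℝ lapply

theorem dot_single_left (x : V) (c : ℝ) (g : V →₀ ℝ) : dot (single x c) g = c * g x := by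
  simp [dot]

theorem dot_apply (f g : V →₀ ℝ) : dot f g = f.sum fun x c => c * g x := by
  simp [dot, linearCombination_apply, Finsupp.sum]

theorem dot_comm (f g : V →₀ ℝ) : dot f g = dot g f := by
  induction f using Finsupp.induction_linear with
  | zero => simp
  | add f₁ f₂ h₁ h₂ => simp [h₁, h₂]
  | single x c =>
    induction g using Finsupp.induction_linear with
    | zero => simp
    | add g₁ g₂ h₁ h₂ => simp_all
    | single y d =>
      obtain rfl | hxy := eq_or_ne x y
      · simp [dot_single_left, mul_comm]
      · simp [dot_single_left, single_eq_of_ne hxy, single_eq_of_ne' hxy]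

theorem dot_single_right (f : V →₀ ℝ) (x : V) (c : ℝ) : dot f (single x c) = f x * c := by
  rw [dot_comm, dot_single_left, mul_comm]

theorem dot_self_nonneg (f : V →₀ ℝ) : 0 ≤ dot f f := by
  rw [dot_apply]
  exact Finset.sum_nonneg fun x _ => mul_self_nonneg _

theorem dot_self_eq_zero {f : V →₀ ℝ} : dot f f = 0 ↔ f = 0 := by
  refine ⟨fun h => ?_, fun h => by simp [h]⟩
  rw [dot_apply, Finsupp.sum, Finset.sum_eq_zero_iff_of_nonneg fun x _ => mul_self_nonneg _] at h
  ext x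
  by_contra hx
  exact hx (mul_self_eq_zero.1 (h x (mem_support_iff.2 hx)))

theorem dot_eq_zero_of_disjoint {s t : Set V} (hst : Disjoint s t) {f g : V →₀ ℝ}
    (hf : f ∈ supported ℝ ℝ s) (hg : g ∈ supported ℝ ℝ t) : dot f g = 0 := by
  rw [dot_apply]
  refine Finset.sum_eq_zero fun x hx => ?_
  simp [(mem_supported' ℝ g).1 hg x (hst.notMem_of_mem_left (hf hx))]

end Finsupp

namespace SimpleGraph

variable {V : Type*} (G : SimpleGraph V)

def walkSet (v : V) (m : ℕ) (u : V) : Set (Fin (m + 1) → V) :=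
  {f | f 0 = v ∧ f (Fin.last m) = u ∧ ∀ i : Fin m, G.Adj (f i.castSucc) (f i.succ)}

theorem walkSet_succ (v : V) (m : ℕ) (u : V) :
    G.walkSet v (m + 1) u = (Fin.snoc · u) '' ⋃ x ∈ G.neighborSet u, G.walkSet v m x := by
  ext f
  simp only [walkSet, Set.mem_image, Set.mem_iUnion, Set.mem_ofPred_eq, mem_neighborSet]
  constructor
  · rintro ⟨h0, hlast, hadj⟩
    refine ⟨Fin.init f, ⟨f (Fin.last m).castSucc, ?_, h0, rfl, fun i => hadj i.castSucc⟩, ?_⟩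
    · simpa [hlast] using (hadj (Fin.last m)).symm
    · simp [← hlast]
  · rintro ⟨g, ⟨x, hux, h0, rfl, hadj⟩, rfl⟩
    refine ⟨by simpa using h0, by simp, Fin.lastCases ?_ fun i => ?_⟩
    · simpa using hux.symm
    · rw [Fin.succ_castSucc, Fin.snoc_castSucc, Fin.snoc_castSucc]
      exact hadj i

variable [G.LocallyFinite]

theorem finite_walkSet (v : V) (m : ℕ) (u : V) : (G.walkSet v m u).Finite := by
  induction m generalizing u with
  | zero =>
    refine Set.Subsingleton.finite fun f hf g hg => funext fun i => ?_
    rw [Fin.fin_one_eq_zero i, hf.1, hg.1]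
  | succ m ih =>
    rw [walkSet_succ]
    exact ((G.neighborSet u).toFinite.biUnion fun x _ => ih x).image _

variable (w : V → V → ℝ)

def weightedRow (x : V) : V →₀ ℝ :=
  ofSupportFinite ((G.neighborSet x).indicator (w x))
    ((G.neighborSet x).toFinite.subset Set.support_indicator_subset)

def weightedAdj : Module.End ℝ (V →₀ ℝ) :=
  linearCombination ℝ (G.weightedRow w)

theorem weightedAdj_single (x : V) (c : ℝ) :
    G.weightedAdj w (single x c) = c • G.weightedRow w x :=
  linearCombination_single ℝ c x

theorem weightedRow_apply (x y : V) :
    G.weightedRow w x y = (G.neighborSet x).indicator (w x) y :=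
  rfl

theorem weightedAdj_apply (h : V →₀ ℝ) (u : V) :
    G.weightedAdj w h u = ∑ x ∈ G.neighborFinset u, h x * w x u := by
  classical
  induction h using Finsupp.induction_linear with
  | zero => simp
  | add f g hf hg => simp [hf, hg, add_mul, Finset.sum_add_distrib]
  | single y c =>
    simp [weightedAdj_single, weightedRow_apply, single_apply, Set.indicator_apply, adj_comm]

theorem weightedRow_comm (hw : ∀ x y, w x y = w y x) (x y : V) :
    G.weightedRow w x y = G.weightedRow w y x := by
  classical
  simp only [weightedRow_apply, Set.indicator_apply, mem_neighborSet, adj_comm, hw x y]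

theorem dot_weightedAdj_comm (hw : ∀ x y, w x y = w y x) (f g : V →₀ ℝ) :
    dot (G.weightedAdj w f) g = dot f (G.weightedAdj w g) := by
  induction f using Finsupp.induction_linear with
  | zero => simp
  | add f₁ f₂ h₁ h₂ => simp [h₁, h₂]
  | single x c =>
    induction g using Finsupp.induction_linear with
    | zero => simp
    | add g₁ g₂ h₁ h₂ => simp_all
    | single y d =>
      simp only [weightedAdj_single, map_smul, LinearMap.smul_apply, dot_single_left,
        dot_single_right, smul_eq_mul, G.weightedRow_comm w hw x y]
      ring

theorem weightedAdj_mem_supported {c : V → ZMod 2} (hc : ∀ x y, G.Adj x y → c y = c x + 1)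
    {p : ZMod 2} {f : V →₀ ℝ} (hf : f ∈ supported ℝ ℝ {x | c x = p}) :
    G.weightedAdj w f ∈ supported ℝ ℝ {x | c x = p + 1} := by
  refine (mem_supported' ℝ _).2 fun u hu => ?_
  rw [weightedAdj_apply]
  refine Finset.sum_eq_zero fun x hx => ?_
  have hfx : f x = 0 := (mem_supported' ℝ f).1 hf x fun hxp =>
    hu (by rw [Set.mem_ofPred_eq, hc x u (G.mem_neighborFinset u x |>.1 hx).symm, hxp])
  rw [hfx, zero_mul]

theorem finsum_walkSet (v : V) (m : ℕ) (u : V) :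
    ∑ᶠ f ∈ G.walkSet v m u, walkProd w f = (G.weightedAdj w ^ m) (single v 1) u := by
  induction m generalizing u with
  | zero =>
    obtain rfl | hvu := eq_or_ne v u
    · have : G.walkSet v 0 v = {fun _ => v} :=
        Set.eq_singleton_iff_unique_mem.2 ⟨⟨rfl, rfl, Fin.elim0⟩,
          fun f hf => funext fun i => by rw [Fin.fin_one_eq_zero i, hf.1]⟩
      simp [this, walkProd]
    · have : G.walkSet v 0 u = ∅ :=
        Set.eq_empty_of_forall_notMem fun f hf => hvu (hf.1.symm.trans hf.2.1)
      simp [this, single_eq_of_ne' hvu]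
  | succ m ih =>
    have hdisj : (G.neighborSet u).PairwiseDisjoint (G.walkSet v m) :=
      fun x _ x' _ hxx' => Set.disjoint_left.2 fun f hf hf' => hxx' (hf.2.1.symm.trans hf'.2.1)
    rw [walkSet_succ, finsum_mem_image fun g _ g' _ h => by simpa using congrArg Fin.init h,
      finsum_mem_biUnion hdisj (Set.toFinite _) fun x _ => G.finite_walkSet v m x, pow_succ',
      Module.End.mul_apply, weightedAdj_apply, ← finsum_mem_coe_finset, coe_neighborFinset]
    refine finsum_mem_congr rfl fun x _ => ?_
    rw [← ih x, finsum_mem_mul]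
    exact finsum_mem_congr rfl fun g hg => by rw [walkProd_snoc, hg.2.1]

end SimpleGraph

def natPathGraph : SimpleGraph ℕ where
  Adj i j := j = i + 1 ∨ i = j + 1
  symm := ⟨fun _ _ => Or.symm⟩
  loopless := ⟨fun _ => by omega⟩

namespace natPathGraph

theorem adj_iff {i j : ℕ} : natPathGraph.Adj i j ↔ j = i + 1 ∨ i = j + 1 := Iff.rfl

instance : natPathGraph.LocallyFinite := fun k =>
  ((Set.finite_Iic (k + 1)).subset fun j hj => by
    rw [SimpleGraph.mem_neighborSet, adj_iff] at hj
    simp only [Set.mem_Iic]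
    omega).fintype

variable (b : ℕ → ℝ)

theorem weightedRow_zero :
    natPathGraph.weightedRow (fun i j => b (max i j)) 0 = single 1 (b 1) := by
  ext j
  rw [SimpleGraph.weightedRow_apply]
  rcases j with _ | _ | j <;> simp [adj_iff]

theorem weightedRow_succ (k : ℕ) :
    natPathGraph.weightedRow (fun i j => b (max i j)) (k + 1) =
      single k (b (k + 1)) + single (k + 2) (b (k + 2)) := by
  classical
  ext j
  rw [SimpleGraph.weightedRow_apply]
  simp only [Set.indicator_apply, SimpleGraph.mem_neighborSet, adj_iff, Finsupp.add_apply,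
    single_apply]
  split_ifs <;> subst_vars <;> first | omega | simp

end natPathGraph

namespace Lanczos

variable {V : Type*}

def normalize (r : V →₀ ℝ) : V →₀ ℝ := (√(dot r r))⁻¹ • r

theorem sqrt_dot_smul_normalize (r : V →₀ ℝ) : √(dot r r) • normalize r = r := by
  obtain rfl | hr := eq_or_ne r 0
  · simp [normalize]
  have hpos : 0 < dot r r :=
    (dot_self_nonneg r).lt_of_ne' (dot_self_eq_zero.not.2 hr)
  rw [normalize, smul_smul, mul_inv_cancel₀ (Real.sqrt_pos.2 hpos).ne', one_smul]

theorem normalize_eq_zero_or_dot_self (r : V →₀ ℝ) :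
    normalize r = 0 ∨ dot (normalize r) (normalize r) = 1 := by
  obtain hr | hr := eq_or_ne (dot r r) 0
  · simp [normalize, hr]
  right
  simp only [normalize, map_smul, LinearMap.smul_apply, smul_eq_mul]
  rw [← mul_assoc, ← mul_inv, Real.mul_self_sqrt (dot_self_nonneg r), inv_mul_cancel₀ hr]

variable (A : Module.End ℝ (V →₀ ℝ)) (e₀ : V →₀ ℝ)

-- `state k = (e (k - 1), e k, b k)` with `e (-1) = 0`. Once a residual vanishes, every later
-- vector and coefficient is `0`, because `(√0)⁻¹ = 0`.
def state : ℕ → (V →₀ ℝ) × (V →₀ ℝ) × ℝ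
  | 0 => (0, e₀, 0)
  | k + 1 =>
    let r := A (state k).2.1 - (state k).2.2 • (state k).1
    ((state k).2.1, normalize r, √(dot r r))

def vec (k : ℕ) : V →₀ ℝ := (state A e₀ k).2.1

def coeff (k : ℕ) : ℝ := (state A e₀ k).2.2

def prev (k : ℕ) : V →₀ ℝ := (state A e₀ k).1

def residual (k : ℕ) : V →₀ ℝ := A (vec A e₀ k) - coeff A e₀ k • prev A e₀ k

@[simp] theorem vec_zero : vec A e₀ 0 = e₀ := rfl
@[simp] theorem coeff_zero : coeff A e₀ 0 = 0 := rfl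
@[simp] theorem prev_zero : prev A e₀ 0 = 0 := rfl
@[simp] theorem prev_succ (k : ℕ) : prev A e₀ (k + 1) = vec A e₀ k := rfl
theorem vec_succ (k : ℕ) : vec A e₀ (k + 1) = normalize (residual A e₀ k) := rfl
theorem coeff_succ (k : ℕ) :
    coeff A e₀ (k + 1) = √(dot (residual A e₀ k) (residual A e₀ k)) := rfl

theorem coeff_succ_smul_vec_succ (k : ℕ) :
    coeff A e₀ (k + 1) • vec A e₀ (k + 1) = residual A e₀ k :=
  sqrt_dot_smul_normalize _

theorem apply_vec (k : ℕ) :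
    A (vec A e₀ k) = coeff A e₀ (k + 1) • vec A e₀ (k + 1) + coeff A e₀ k • prev A e₀ k := by
  rw [coeff_succ_smul_vec_succ, residual, sub_add_cancel]

theorem coeff_eq_zero_of_vec_eq_zero {k : ℕ} (hk : vec A e₀ k = 0) : coeff A e₀ k = 0 := by
  cases k with
  | zero => rfl
  | succ k =>
    have hr : residual A e₀ k = 0 := by rw [← coeff_succ_smul_vec_succ, hk, smul_zero]
    simp [coeff_succ, hr]

theorem coeff_succ_eq_zero_of_vec_eq_zero {k : ℕ} (hk : vec A e₀ k = 0) :
    coeff A e₀ (k + 1) = 0 := by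
  simp [coeff_succ, residual, hk, coeff_eq_zero_of_vec_eq_zero A e₀ hk]

theorem vec_eq_zero_or_dot_self (h₀ : dot e₀ e₀ = 1) (k : ℕ) :
    vec A e₀ k = 0 ∨ dot (vec A e₀ k) (vec A e₀ k) = 1 := by
  cases k with
  | zero => exact Or.inr h₀
  | succ k => exact normalize_eq_zero_or_dot_self _

theorem coeff_mul_dot_self (h₀ : dot e₀ e₀ = 1) (k : ℕ) :
    coeff A e₀ k * dot (vec A e₀ k) (vec A e₀ k) = coeff A e₀ k := by
  obtain hk | hk := vec_eq_zero_or_dot_self A e₀ h₀ k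
  · simp [coeff_eq_zero_of_vec_eq_zero A e₀ hk]
  · rw [hk, mul_one]

theorem coeff_succ_mul_dot_self (h₀ : dot e₀ e₀ = 1) (k : ℕ) :
    coeff A e₀ (k + 1) * dot (vec A e₀ k) (vec A e₀ k) = coeff A e₀ (k + 1) := by
  obtain hk | hk := vec_eq_zero_or_dot_self A e₀ h₀ k
  · simp [coeff_succ_eq_zero_of_vec_eq_zero A e₀ hk]
  · rw [hk, mul_one]

theorem dot_vec_prev_eq_zero {k : ℕ} (hk : ∀ i < k, dot (vec A e₀ k) (vec A e₀ i) = 0)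
    {j : ℕ} (hj : j ≤ k) : dot (vec A e₀ k) (prev A e₀ j) = 0 := by
  cases j with
  | zero => simp
  | succ j => exact hk j hj

theorem dot_vec_vec_eq_zero (hsymm : ∀ f g, dot (A f) g = dot f (A g))
    (hdiag : ∀ k, dot (vec A e₀ k) (A (vec A e₀ k)) = 0) (h₀ : dot e₀ e₀ = 1) :
    ∀ k, ∀ j < k, dot (vec A e₀ k) (vec A e₀ j) = 0 := by
  intro k
  induction k using Nat.strong_induction_on with | _ k ih => ?_
  rcases k with _ | k
  · simp
  intro j hj
  suffices dot (residual A e₀ k) (vec A e₀ j) = 0 by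
    simp [vec_succ, normalize, this]
  have hk := ih k (Nat.lt_succ_self k)
  have hprev {i : ℕ} := dot_vec_prev_eq_zero A e₀ hk (j := i)
  rw [residual, map_sub, map_smul, LinearMap.sub_apply, LinearMap.smul_apply, smul_eq_mul]
  obtain rfl | hjk := (Nat.lt_succ_iff.1 hj).eq_or_lt
  · rw [dot_comm, hdiag, dot_comm, hprev le_rfl, mul_zero, sub_zero]
  rw [hsymm, apply_vec, map_add, map_smul, map_smul, smul_eq_mul, smul_eq_mul, hprev hjk.le,
    mul_zero, add_zero]
  obtain rfl | hjk' := (Nat.succ_le_of_lt hjk).eq_or_lt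
  · rw [prev_succ, coeff_mul_dot_self A e₀ h₀, coeff_succ_mul_dot_self A e₀ h₀, sub_self]
  obtain ⟨k, rfl⟩ : ∃ i, k = i + 1 := ⟨k - 1, by omega⟩
  rw [hk (j + 1) hjk', prev_succ, ih k (by omega) j (by omega), mul_zero, mul_zero, sub_zero]

theorem vec_mem_supported {c : V → ZMod 2}
    (hA : ∀ p, ∀ f ∈ supported ℝ ℝ {x | c x = p}, A f ∈ supported ℝ ℝ {x | c x = p + 1})
    {p : ZMod 2} (he₀ : e₀ ∈ supported ℝ ℝ {x | c x = p}) (k : ℕ) :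
    vec A e₀ k ∈ supported ℝ ℝ {x | c x = p + k} ∧
      prev A e₀ k ∈ supported ℝ ℝ {x | c x = p + k + 1} := by
  induction k with
  | zero => simpa using he₀
  | succ k ih =>
    have hpar : p + (k + 1 : ℕ) = p + k + 1 := by push_cast; ring
    have hpar' : p + (k + 1 : ℕ) + 1 = p + k := by
      rw [hpar, add_assoc, show (1 : ZMod 2) + 1 = 0 from rfl, add_zero]
    rw [hpar', prev_succ, hpar, vec_succ, residual, normalize]
    exact ⟨Submodule.smul_mem _ _ (Submodule.sub_mem _ (hA _ _ ih.1)
      (Submodule.smul_mem _ _ ih.2)), ih.1⟩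

theorem dot_vec_apply_vec_eq_zero {c : V → ZMod 2}
    (hA : ∀ p, ∀ f ∈ supported ℝ ℝ {x | c x = p}, A f ∈ supported ℝ ℝ {x | c x = p + 1})
    {p : ZMod 2} (he₀ : e₀ ∈ supported ℝ ℝ {x | c x = p}) (k : ℕ) :
    dot (vec A e₀ k) (A (vec A e₀ k)) = 0 := by
  have hk := (vec_mem_supported A e₀ hA he₀ k).1
  refine dot_eq_zero_of_disjoint (Set.disjoint_left.2 fun x hx hx' => ?_) hk (hA _ _ hk)
  simp_all

theorem comp_linearCombination_vec :
    A ∘ₗ linearCombination ℝ (vec A e₀) = linearCombination ℝ (vec A e₀) ∘ₗ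
      natPathGraph.weightedAdj (fun i j => coeff A e₀ (max i j)) := by
  refine Finsupp.lhom_ext fun k c => ?_
  simp only [LinearMap.comp_apply, linearCombination_single, map_smul,
    SimpleGraph.weightedAdj_single]
  congr 1
  rw [apply_vec]
  cases k with
  | zero => simp [natPathGraph.weightedRow_zero]
  | succ k =>
    rw [natPathGraph.weightedRow_succ, map_add, linearCombination_single,
      linearCombination_single, prev_succ, add_comm]

theorem pow_apply_eq_linearCombination (m : ℕ) :
    (A ^ m) e₀ = linearCombination ℝ (vec A e₀)
      (((natPathGraph.weightedAdj fun i j => coeff A e₀ (max i j)) ^ m) (single 0 1)) := by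
  induction m with
  | zero => simp
  | succ m ih =>
    rw [pow_succ', Module.End.mul_apply, ih, pow_succ', Module.End.mul_apply,
      ← LinearMap.comp_apply, comp_linearCombination_vec, LinearMap.comp_apply]

theorem dot_linearCombination_vec_self (h₀ : dot e₀ e₀ = 1)
    (horth : ∀ k, ∀ j < k, dot (vec A e₀ k) (vec A e₀ j) = 0) (h : ℕ →₀ ℝ) :
    dot (linearCombination ℝ (vec A e₀) h) e₀ = h 0 := by
  induction h using Finsupp.induction_linear with
  | zero => simp
  | add f g hf hg => simp [hf, hg]
  | single k c =>
    cases k with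
    | zero => simp [h₀]
    | succ k => simpa using mul_eq_zero_of_right c (horth (k + 1) 0 k.succ_pos)

theorem dot_pow_apply_self {c : V → ZMod 2} (hsymm : ∀ f g, dot (A f) g = dot f (A g))
    (hA : ∀ p, ∀ f ∈ supported ℝ ℝ {x | c x = p}, A f ∈ supported ℝ ℝ {x | c x = p + 1})
    {p : ZMod 2} (he₀ : e₀ ∈ supported ℝ ℝ {x | c x = p}) (h₀ : dot e₀ e₀ = 1) (m : ℕ) :
    dot ((A ^ m) e₀) e₀ =
      ((natPathGraph.weightedAdj fun i j => coeff A e₀ (max i j)) ^ m) (single 0 1) 0 := by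
  rw [pow_apply_eq_linearCombination, dot_linearCombination_vec_self A e₀ h₀
    (dot_vec_vec_eq_zero A e₀ hsymm (dot_vec_apply_vec_eq_zero A e₀ hA he₀) h₀)]

end Lanczos

end

/-- Let `G` be a locally finite bipartite simple graph, `v` a vertex, and `w` a
symmetric real edge-weight function. If `a n` is the weighted sum over all closed
walks of length `2n` at `v`, then `a` is path-enumerable. -/
theorem stmt5 {V : Type} (G : SimpleGraph V) (hfin : G.LocallyFinite)
    (hbip : G.Colorable 2) (v : V) (w : V → V → ℝ)
    (hw : ∀ u u' : V, w u u' = w u' u) (a : ℕ → ℝ)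
    (ha : ∀ n : ℕ, a n =
      ∑ᶠ f ∈ {f : Fin (2 * n + 1) → V | f 0 = v ∧ f (Fin.last (2 * n)) = v ∧
          ∀ i : Fin (2 * n), G.Adj (f i.castSucc) (f i.succ)},
        ∏ i : Fin (2 * n), w (f i.castSucc) (f i.succ)) :
    IsPathEnum a := by
  obtain ⟨C⟩ := hbip
  have hc : ∀ x y, G.Adj x y → (C y : ZMod 2) = C x + 1 := fun x y hxy => by
    have key : ∀ i j : ZMod 2, i ≠ j → j = i + 1 := by decide
    exact key _ _ (C.valid hxy)
  set A := G.weightedAdj w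
  set b := Lanczos.coeff A (single v 1)
  have hwalk (n : ℕ) : a n = dot ((A ^ (2 * n)) (single v 1)) (single v 1) := by
    rw [ha n, dot_single_right, mul_one]
    exact G.finsum_walkSet w v (2 * n) v
  have ha₀ : a 0 = 1 := by simp [hwalk, dot_single_left]
  refine ⟨ha₀ ▸ zero_le_one, b, fun n => ?_⟩
  rw [ha₀, one_mul, hwalk, Lanczos.dot_pow_apply_self A _ (G.dot_weightedAdj_comm w hw)
    (fun _ _ => G.weightedAdj_mem_supported w hc) (single_mem_supported ℝ 1 rfl)
    (by simp [dot_single_left])]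
  -- `closedWalks0 n` and `walkWeight b n` are, by definition, the closed walks at `0` in
  -- `natPathGraph` and their weights for the edge weights `fun i j => b (max i j)`.
  exact (natPathGraph.finsum_walkSet _ 0 (2 * n) 0).symm
end

section
/- Fix integers k ≥ 1 and n ≥ 0. Let (P_1, …, P_k) be a k-tuple of pairwise non-intersecting Dyck paths where P_j starts at (−2(j−1), 0) and has length 2n + 4(j−1). Then for each j ∈ {1, …, k}: the first 2(j−1) steps of P_j are upsteps, the last 2(j−1) steps of P_j are downsteps, and at every x-coordinate between 0 and 2n the height of P_j is at least 2(j−1). -/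
/-- Dyck-path height functions of length `2N`, encoded as `h : ℕ → ℕ` with
`h 0 = 0`, steps `±1` up to index `2N`, and extended by `0` beyond `2N`.
The Dyck path starting at `(m, 0)` of length `2N` encoded by `h` consists of the
lattice points `(m + i, h i)` for `0 ≤ i ≤ 2N`. -/
def DyckN (N : ℕ) : Set (ℕ → ℕ) :=
  {h | h 0 = 0 ∧ (∀ i : ℕ, 2 * N ≤ i → h i = 0) ∧
    ∀ i : ℕ, i < 2 * N → (h (i + 1) = h i + 1 ∨ h i = h (i + 1) + 1)}

/-- `A_n`: `k`-tuples of pairwise non-intersecting Dyck paths, where the `j`-th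
path (`j : Fin k` zero-indexed) starts at `(-2j, 0)` and has length `2n + 4j`;
`P j` records its heights, so its lattice points are `(i - 2j, P j i)` for
`0 ≤ i ≤ 2(n + 2j)`. Non-intersecting means no two paths share a lattice point. -/
def Aset (k n : ℕ) : Set (Fin k → ℕ → ℕ) :=
  {P | (∀ j : Fin k, P j ∈ DyckN (n + 2 * (j : ℕ))) ∧
    ∀ j j' : Fin k, j ≠ j' → ∀ i i' : ℕ,
      i ≤ 2 * (n + 2 * (j : ℕ)) → i' ≤ 2 * (n + 2 * (j' : ℕ)) →
      (i : ℤ) - 2 * (j : ℕ) = (i' : ℤ) - 2 * (j' : ℕ) → P j i ≠ P j' i'}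

section Aux

variable {N : ℕ} {h : ℕ → ℕ}

lemma dyck_le (h0 : h 0 = 0)
    (hstep : ∀ i, i < 2 * N → (h (i + 1) = h i + 1 ∨ h i = h (i + 1) + 1)) :
    ∀ i, i ≤ 2 * N → h i ≤ i := by
  intro i
  induction i with
  | zero => intro _; omega
  | succ i ih =>
    intro hle
    have h1 := hstep i (by omega)
    have h2 := ih (by omega)
    omega

lemma dyck_parity (h0 : h 0 = 0)
    (hstep : ∀ i, i < 2 * N → (h (i + 1) = h i + 1 ∨ h i = h (i + 1) + 1)) :
    ∀ i, i ≤ 2 * N → h i % 2 = i % 2 := by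
  intro i
  induction i with
  | zero => intro _; omega
  | succ i ih =>
    intro hle
    have h1 := hstep i (by omega)
    have h2 := ih (by omega)
    omega

lemma dyck_le_sub (hend : h (2 * N) = 0)
    (hstep : ∀ i, i < 2 * N → (h (i + 1) = h i + 1 ∨ h i = h (i + 1) + 1)) :
    ∀ d i, i + d = 2 * N → h i ≤ d := by
  intro d
  induction d with
  | zero =>
    intro i hi
    have e : i = 2 * N := by omega
    rw [e, hend]
  | succ d ih =>
    intro i hi
    have h1 := hstep i (by omega)
    have h2 := ih (i + 1) (by omega)
    omega

/-- If `h m = m` then all steps before `m` are up-steps. -/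
lemma dyck_all_up (h0 : h 0 = 0)
    (hstep : ∀ i, i < 2 * N → (h (i + 1) = h i + 1 ∨ h i = h (i + 1) + 1))
    {m : ℕ} (hm : m ≤ 2 * N) (hval : h m = m) :
    ∀ i, i ≤ m → h i = i := by
  have key : ∀ d, d ≤ m → h (m - d) = m - d := by
    intro d
    induction d with
    | zero => intro _; simpa using hval
    | succ d ih =>
      intro hd
      have ihd := ih (by omega)
      have hs := hstep (m - (d + 1)) (by omega)
      have hb := dyck_le h0 hstep (m - (d + 1)) (by omega)
      have e : m - (d + 1) + 1 = m - d := by omega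
      rw [e] at hs
      omega
  intro i hi
  have hk := key (m - i) (by omega)
  have e : m - (m - i) = i := by omega
  rw [e] at hk
  omega

/-- If `h m + m = 2N` then `h i + i = 2N` for all `m ≤ i ≤ 2N`. -/
lemma dyck_all_down (hend : ∀ i, 2 * N ≤ i → h i = 0)
    (hstep : ∀ i, i < 2 * N → (h (i + 1) = h i + 1 ∨ h i = h (i + 1) + 1))
    {m : ℕ} (hval : h m + m = 2 * N) :
    ∀ i, m ≤ i → i ≤ 2 * N → h i + i = 2 * N := by
  intro i
  induction i with
  | zero =>
    intro h1 h2
    have e : m = 0 := by omega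
    subst e
    exact hval
  | succ i ih =>
    intro h1 h2
    by_cases hc : m ≤ i
    · have hi := ih hc (by omega)
      have hs := hstep i (by omega)
      have hb := dyck_le_sub (hend (2 * N) le_rfl) hstep (2 * N - (i + 1)) (i + 1) (by omega)
      omega
    · have : m = i + 1 := by omega
      subst this
      exact hval

end Aux

/-- For a `k`-tuple in `A_n`, the `j`-th path (zero-indexed `j`) has its first `2j`
steps up, its last `2j` steps down, and stays at height at least `2j` at all
`x`-coordinates between `0` and `2n` (i.e. indices between `2j` and `2n + 2j`). -/
theorem stmt10 (k n : ℕ) (hk : 1 ≤ k) (P : Fin k → ℕ → ℕ) (hP : P ∈ Aset k n) :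
    ∀ j : Fin k,
      (∀ i : ℕ, i < 2 * (j : ℕ) → P j (i + 1) = P j i + 1) ∧
      (∀ i : ℕ, 2 * n + 2 * (j : ℕ) ≤ i → i < 2 * (n + 2 * (j : ℕ)) →
        P j i = P j (i + 1) + 1) ∧
      (∀ i : ℕ, 2 * (j : ℕ) ≤ i → i ≤ 2 * n + 2 * (j : ℕ) → 2 * (j : ℕ) ≤ P j i) := by
  obtain ⟨hD, hNI⟩ := hP
  have H0 : ∀ jv (hj : jv < k), P ⟨jv, hj⟩ 0 = 0 := fun jv hj => (hD ⟨jv, hj⟩).1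
  have Hend : ∀ jv (hj : jv < k) i, 2 * (n + 2 * jv) ≤ i → P ⟨jv, hj⟩ i = 0 :=
    fun jv hj => (hD ⟨jv, hj⟩).2.1
  have Hstep : ∀ jv (hj : jv < k) i, i < 2 * (n + 2 * jv) →
      (P ⟨jv, hj⟩ (i + 1) = P ⟨jv, hj⟩ i + 1 ∨ P ⟨jv, hj⟩ i = P ⟨jv, hj⟩ (i + 1) + 1) :=
    fun jv hj => (hD ⟨jv, hj⟩).2.2
  have HNI : ∀ jv jv' (hj : jv < k) (hj' : jv' < k), jv ≠ jv' → ∀ i i' : ℕ,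
      i ≤ 2 * (n + 2 * jv) → i' ≤ 2 * (n + 2 * jv') →
      (i : ℤ) - 2 * jv = (i' : ℤ) - 2 * jv' → P ⟨jv, hj⟩ i ≠ P ⟨jv', hj'⟩ i' := by
    intro jv jv' hj hj' hne
    exact hNI ⟨jv, hj⟩ ⟨jv', hj'⟩ (by simpa [Fin.ext_iff] using hne)
  suffices Φ : ∀ jv (hj : jv < k),
      (∀ i : ℕ, i < 2 * jv → P ⟨jv, hj⟩ (i + 1) = P ⟨jv, hj⟩ i + 1) ∧
      (∀ i : ℕ, 2 * n + 2 * jv ≤ i → i < 2 * (n + 2 * jv) →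
        P ⟨jv, hj⟩ i = P ⟨jv, hj⟩ (i + 1) + 1) ∧
      (∀ i : ℕ, 2 * jv ≤ i → i ≤ 2 * n + 2 * jv → 2 * jv ≤ P ⟨jv, hj⟩ i) by
    intro j
    exact Φ j.1 j.2
  intro jv
  induction jv with
  | zero =>
    intro hj
    refine ⟨fun i hi => by omega, fun i h1 h2 => by omega, fun i _ _ => by omega⟩
  | succ j ih =>
    intro hj
    have hjk : j < k := by omega
    obtain ⟨ih1, ih2, ih3⟩ := ih hjk
    -- key separation lemma
    have key : ∀ t, t ≤ 2 * (n + 2 * j) → P ⟨j, hjk⟩ t + 2 ≤ P ⟨j + 1, hj⟩ (t + 2) := by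
      intro t
      induction t with
      | zero =>
        intro _
        have hne := HNI j (j + 1) hjk hj (by omega) 0 2 (by omega) (by omega)
          (by push_cast; ring)
        have hpar := dyck_parity (H0 (j + 1) hj) (Hstep (j + 1) hj) 2 (by omega)
        have h00 := H0 j hjk
        show P ⟨j, hjk⟩ 0 + 2 ≤ P ⟨j + 1, hj⟩ 2
        omega
      | succ t iht =>
        intro ht
        have hprev := iht (by omega)
        have hs1 := Hstep j hjk t (by omega)
        have hs2 := Hstep (j + 1) hj (t + 2) (by omega)
        have hne := HNI j (j + 1) hjk hj (by omega) (t + 1) (t + 3) (by omega) (by omega)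
          (by push_cast; ring)
        have hp1 := dyck_parity (H0 j hjk) (Hstep j hjk) (t + 1) (by omega)
        have hp2 := dyck_parity (H0 (j + 1) hj) (Hstep (j + 1) hj) (t + 3) (by omega)
        have e : t + 1 + 2 = t + 3 := by omega
        have e2 : t + 2 + 1 = t + 3 := by omega
        rw [e2] at hs2
        rw [e]
        omega
    refine ⟨?_, ?_, ?_⟩
    · -- first 2(j+1) steps up
      have htop : P ⟨j + 1, hj⟩ (2 * j + 2) = 2 * j + 2 := by
        have hk1 := key (2 * j) (by omega)
        have hlow := ih3 (2 * j) le_rfl (by omega)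
        have hup := dyck_le (H0 (j + 1) hj) (Hstep (j + 1) hj) (2 * j + 2) (by omega)
        omega
      have hall := dyck_all_up (H0 (j + 1) hj) (Hstep (j + 1) hj)
        (show 2 * j + 2 ≤ 2 * (n + 2 * (j + 1)) by omega) htop
      intro i hi
      have e1 := hall i (by omega)
      have e2 := hall (i + 1) (by omega)
      omega
    · -- last 2(j+1) steps down
      have hbot : P ⟨j + 1, hj⟩ (2 * n + 2 * j + 2) + (2 * n + 2 * j + 2)
          = 2 * (n + 2 * (j + 1)) := by
        have hk1 := key (2 * n + 2 * j) (by omega)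
        have hlow := ih3 (2 * n + 2 * j) (by omega) le_rfl
        have hup := dyck_le_sub (Hend (j + 1) hj (2 * (n + 2 * (j + 1))) le_rfl)
          (Hstep (j + 1) hj) (2 * j + 2) (2 * n + 2 * j + 2) (by omega)
        have e : 2 * n + 2 * j + 2 = 2 * n + 2 * j + 2 := rfl
        omega
      have hall := dyck_all_down (Hend (j + 1) hj) (Hstep (j + 1) hj) hbot
      intro i h1 h2
      have e1 := hall i (by omega) (by omega)
      have e2 := hall (i + 1) (by omega) (by omega)
      omega
    · -- stays at height ≥ 2(j+1)
      intro i h1 h2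
      have hk1 := key (i - 2) (by omega)
      have hlow := ih3 (i - 2) (by omega) (by omega)
      have e : i - 2 + 2 = i := by omega
      rw [e] at hk1
      omega
end

section
/- Fix integers k ≥ 1 and n ≥ 0 and weights w : ℕ → ℝ (indexed from 1). Then Σ_{(P_1,…,P_k) ∈ A_n} ∏_{j=1}^k f_w(P_j) = (∏_{j=1}^k ∏_{m=1}^{2(j−1)} w(m)²) · Σ_{(h_1,…,h_k) ∈ B_n} ∏_{j=1}^k f_{θ^{2j−2}(w)}(h_j). -/
/-- The weight `f_w` of a Dyck path of length `2N` with heights `h`: the product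
over the steps of `w` evaluated at the larger endpoint height. -/
def fw (w : ℕ → ℝ) (N : ℕ) (h : ℕ → ℕ) : ℝ :=
  ∏ i ∈ Finset.range (2 * N), w (max (h i) (h (i + 1)))

/-- `B_n`: `k`-tuples of Dyck-path height functions of length `2n` that are
pointwise ordered: `h_j(i) ≤ h_{j'}(i)` whenever `j ≤ j'`. -/
def BsetN (k n : ℕ) : Set (Fin k → ℕ → ℕ) :=
  {H | (∀ j : Fin k, H j ∈ DyckN n) ∧
    ∀ j j' : Fin k, j ≤ j' → ∀ i : ℕ, H j i ≤ H j' i}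

/-!
Non-intersection plus parity keeps consecutive paths of a family in `A_n` at least two apart
at aligned points, so the `j`-th path lies at height `≥ 2j` on its middle window of length `2n`.
Being a Dyck path, it must then climb straight to height `2j` in its first `2j` steps and descend
straight in its last `2j`. Cutting off these ramps and lowering by `2j` is a bijection
`A_n ≃ B_n`; each ramp contributes `∏_{m=1}^{2j} w(m)` and the middle window the weight of the
lowered path with the shifted weights `θ^{2j}(w)`.
-/

section Walk

variable {h : ℕ → ℕ} {N : ℕ}

theorem le_add_of_unit_steps
    (hs : ∀ i : ℕ, i < 2 * N → (h (i + 1) = h i + 1 ∨ h i = h (i + 1) + 1))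
    (a m : ℕ) (ham : a + m ≤ 2 * N) : h (a + m) ≤ h a + m ∧ h a ≤ h (a + m) + m := by
  induction m with
  | zero => simp
  | succ m ih =>
    have := ih (by omega)
    have := hs (a + m) (by omega)
    rw [← add_assoc]
    omega

theorem mod_two_eq_of_unit_steps (h0 : h 0 = 0)
    (hs : ∀ i : ℕ, i < 2 * N → (h (i + 1) = h i + 1 ∨ h i = h (i + 1) + 1))
    {i : ℕ} (hi : i ≤ 2 * N) : h i % 2 = i % 2 := by
  induction i with
  | zero => simp [h0]
  | succ i ih =>
    have := ih (by omega)
    have := hs i (by omega)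
    omega

end Walk

namespace Aset

variable {k n : ℕ} {P : Fin k → ℕ → ℕ}

/-- Aligned points of two paths never coincide and have the same parity, and each path moves
by `±1` per step, so a gap of `2` at the start propagates. -/
theorem add_two_le (hP : P ∈ Aset k n) {j j' : Fin k} (hjj : j < j') {i : ℕ}
    (hi : i ≤ 2 * (n + 2 * (j : ℕ))) : P j i + 2 ≤ P j' (i + 2 * ((j' : ℕ) - j)) := by
  obtain ⟨hD, hNI⟩ := hP
  have hne : j ≠ j' := hjj.ne
  rw [Fin.lt_def] at hjj
  have hpar (a : Fin k) (i : ℕ) (hi : i ≤ 2 * (n + 2 * (a : ℕ))) : P a i % 2 = i % 2 :=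
    mod_two_eq_of_unit_steps (hD a).1 (hD a).2.2 hi
  induction i with
  | zero =>
    have hstart := (hD j).1
    have hdisj := hNI j j' hne 0 (2 * ((j' : ℕ) - j)) (by omega) (by omega) (by push_cast; omega)
    have hpar' := hpar j' (2 * ((j' : ℕ) - j)) (by omega)
    simp only [zero_add]
    omega
  | succ i ih =>
    have hgap := ih (by omega)
    have hstep := (hD j).2.2 i (by omega)
    have hstep' := (hD j').2.2 (i + 2 * ((j' : ℕ) - j)) (by omega)
    rw [add_right_comm] at hstep'
    have hdisj := hNI j j' hne (i + 1) (i + 1 + 2 * ((j' : ℕ) - j)) (by omega) (by omega)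
      (by push_cast; omega)
    have hpar₁ := hpar j (i + 1) (by omega)
    have hpar₂ := hpar j' (i + 1 + 2 * ((j' : ℕ) - j)) (by omega)
    omega

theorem add_two_mul_sub_le (hP : P ∈ Aset k n) {j j' : Fin k} (hjj : j ≤ j') {i : ℕ}
    (hi : i ≤ 2 * n) :
    P j (i + 2 * (j : ℕ)) + 2 * ((j' : ℕ) - j) ≤ P j' (i + 2 * (j' : ℕ)) := by
  obtain ⟨m, hm⟩ : ∃ m, (j' : ℕ) = j + m := ⟨j' - j, by rw [Fin.le_def] at hjj; omega⟩
  induction m generalizing j' with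
  | zero =>
    obtain rfl : j = j' := Fin.ext (by omega)
    omega
  | succ m ih =>
    let jm : Fin k := ⟨j + m, by omega⟩
    have hjm : (jm : ℕ) = j + m := rfl
    have := ih (j' := jm) (Fin.le_def.mpr (by omega)) hjm
    have := add_two_le hP (j := jm) (j' := j') (Fin.lt_def.mpr (by omega))
      (i := i + 2 * (jm : ℕ)) (by omega)
    rw [show i + 2 * (jm : ℕ) + 2 * ((j' : ℕ) - jm) = i + 2 * (j' : ℕ) by omega] at this
    omega

theorem two_mul_le (hP : P ∈ Aset k n) (j : Fin k) {i : ℕ} (hi : i ≤ 2 * n) :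
    2 * (j : ℕ) ≤ P j (i + 2 * (j : ℕ)) := by
  have := add_two_mul_sub_le hP (j := ⟨0, j.pos⟩) (j' := j) (Fin.le_def.mpr (Nat.zero_le _)) hi
  simp only [mul_zero, add_zero, tsub_zero] at this
  omega

theorem apply_eq_self (hP : P ∈ Aset k n) (j : Fin k) {i : ℕ} (hi : i ≤ 2 * (j : ℕ)) :
    P j i = i := by
  have hD := hP.1 j
  have := le_add_of_unit_steps hD.2.2 0 i (by omega)
  have := le_add_of_unit_steps hD.2.2 i (2 * (j : ℕ) - i) (by omega)
  have := two_mul_le hP j (Nat.zero_le _)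
  rw [Nat.add_sub_cancel' hi] at *
  simp only [zero_add, hD.1] at *
  omega

theorem apply_eq_sub (hP : P ∈ Aset k n) (j : Fin k) {i : ℕ}
    (hi : 2 * n + 2 * (j : ℕ) ≤ i) :
    P j i = 2 * (n + 2 * (j : ℕ)) - i := by
  have hD := hP.1 j
  by_cases hc : i ≤ 2 * (n + 2 * (j : ℕ))
  · have := le_add_of_unit_steps hD.2.2 i (2 * (n + 2 * (j : ℕ)) - i) (by omega)
    rw [Nat.add_sub_cancel' hc, hD.2.1 _ le_rfl] at this
    have := le_add_of_unit_steps hD.2.2 (2 * n + 2 * (j : ℕ)) (i - (2 * n + 2 * (j : ℕ)))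
      (by omega)
    rw [Nat.add_sub_cancel' hi] at this
    have := two_mul_le hP j le_rfl
    omega
  · have := hD.2.1 i (by omega)
    omega

end Aset

def padPath (n j : ℕ) (h : ℕ → ℕ) (i : ℕ) : ℕ :=
  if i < 2 * j then i
  else if i ≤ 2 * j + 2 * n then h (i - 2 * j) + 2 * j
  else 2 * (n + 2 * j) - i

section padPath

variable {n j i : ℕ} {h : ℕ → ℕ}

theorem padPath_of_le (h0 : h 0 = 0) (hi : i ≤ 2 * j) : padPath n j h i = i := by
  unfold padPath
  split_ifs
  · rfl
  · rw [show i - 2 * j = 0 by omega, h0]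
    omega
  · omega

theorem padPath_of_mem_Icc (h1 : 2 * j ≤ i) (h2 : i ≤ 2 * j + 2 * n) :
    padPath n j h i = h (i - 2 * j) + 2 * j := by
  rw [padPath, if_neg (by omega), if_pos h2]

theorem padPath_of_ge (hend : h (2 * n) = 0) (hi : 2 * n + 2 * j ≤ i) :
    padPath n j h i = 2 * (n + 2 * j) - i := by
  unfold padPath
  split_ifs
  · omega
  · rw [show i - 2 * j = 2 * n by omega, hend]
    omega
  · rfl

theorem padPath_mem_dyckN (hh : h ∈ DyckN n) : padPath n j h ∈ DyckN (n + 2 * j) := by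
  obtain ⟨h0, hend, hs⟩ := hh
  refine ⟨padPath_of_le h0 (Nat.zero_le _), fun i hi => ?_, fun i hi => ?_⟩
  · rw [padPath_of_ge (hend _ le_rfl) (by omega)]
    omega
  · rcases Nat.lt_or_ge i (2 * j) with c1 | c1
    · rw [padPath_of_le h0 (by omega), padPath_of_le h0 (by omega)]
      exact Or.inl rfl
    rcases Nat.lt_or_ge i (2 * j + 2 * n) with c2 | c2
    · rw [padPath_of_mem_Icc (by omega) (by omega), padPath_of_mem_Icc (by omega) (by omega),
        show i + 1 - 2 * j = i - 2 * j + 1 by omega]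
      have := hs (i - 2 * j) (by omega)
      omega
    · rw [padPath_of_ge (hend _ le_rfl) (by omega), padPath_of_ge (hend _ le_rfl) (by omega)]
      omega

theorem padPath_lt_padPath {h' : ℕ → ℕ} {j' : ℕ} (hh : h ∈ DyckN n) (hh' : h' ∈ DyckN n)
    (hle : ∀ x, h x ≤ h' x) (hjj : j < j') (hi : i ≤ 2 * (n + 2 * j)) :
    padPath n j h i < padPath n j' h' (i + 2 * (j' - j)) := by
  rcases Nat.lt_or_ge i (2 * j) with c1 | c1
  · rw [padPath_of_le hh.1 (by omega), padPath_of_le hh'.1 (by omega)]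
    omega
  rcases Nat.lt_or_ge i (2 * j + 2 * n) with c2 | c2
  · rw [padPath_of_mem_Icc (by omega) (by omega), padPath_of_mem_Icc (by omega) (by omega),
      show i + 2 * (j' - j) - 2 * j' = i - 2 * j by omega]
    have := hle (i - 2 * j)
    omega
  · rw [padPath_of_ge (hh.2.1 _ le_rfl) (by omega), padPath_of_ge (hh'.2.1 _ le_rfl) (by omega)]
    omega

end padPath

section padPaths

variable {k n : ℕ}

def padPaths (n : ℕ) (H : Fin k → ℕ → ℕ) : Fin k → ℕ → ℕ :=
  fun j => padPath n j (H j)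

def unpadPaths (n : ℕ) (P : Fin k → ℕ → ℕ) : Fin k → ℕ → ℕ :=
  fun j i => if i ≤ 2 * n then P j (i + 2 * (j : ℕ)) - 2 * (j : ℕ) else 0

theorem padPaths_mem_aset {H : Fin k → ℕ → ℕ} (hH : H ∈ BsetN k n) :
    padPaths n H ∈ Aset k n := by
  obtain ⟨hD, hord⟩ := hH
  refine ⟨fun j => padPath_mem_dyckN (hD j), fun j j' hne i i' hi hi' hii => ?_⟩
  rcases Fin.lt_or_lt_of_ne hne with hlt | hlt
  · obtain rfl : i' = i + 2 * ((j' : ℕ) - j) := by rw [Fin.lt_def] at hlt; omega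
    exact (padPath_lt_padPath (hD j) (hD j') (hord j j' hlt.le) hlt hi).ne
  · obtain rfl : i = i' + 2 * ((j : ℕ) - j') := by rw [Fin.lt_def] at hlt; omega
    exact (padPath_lt_padPath (hD j') (hD j) (hord j' j hlt.le) hlt hi').ne'

theorem unpadPaths_mem_bsetN {P : Fin k → ℕ → ℕ} (hP : P ∈ Aset k n) :
    unpadPaths n P ∈ BsetN k n := by
  refine ⟨fun j => ⟨?_, fun i hi => ?_, fun i hi => ?_⟩, fun j j' hjj i => ?_⟩
  · simp only [unpadPaths, Nat.zero_le, if_true, zero_add, Aset.apply_eq_self hP j le_rfl,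
      Nat.sub_self]
  · simp only [unpadPaths]
    split_ifs
    · rw [show i = 2 * n by omega, Aset.apply_eq_sub hP j le_rfl]
      omega
    · rfl
  · simp only [unpadPaths, if_pos (show i + 1 ≤ 2 * n by omega),
      if_pos (show i ≤ 2 * n by omega)]
    have := (hP.1 j).2.2 (i + 2 * (j : ℕ)) (by omega)
    rw [add_right_comm] at this
    have := Aset.two_mul_le hP j (i := i) (by omega)
    have := Aset.two_mul_le hP j (i := i + 1) (by omega)
    omega
  · simp only [unpadPaths]
    split_ifs with hi
    · have := Aset.add_two_mul_sub_le hP hjj hi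
      have := Aset.two_mul_le hP j hi
      rw [Fin.le_def] at hjj
      omega
    · rfl

theorem unpadPaths_padPaths {H : Fin k → ℕ → ℕ} (hH : H ∈ BsetN k n) :
    unpadPaths n (padPaths n H) = H := by
  funext j i
  simp only [unpadPaths, padPaths]
  split_ifs with hi
  · rw [padPath_of_mem_Icc (by omega) (by omega), Nat.add_sub_cancel, Nat.add_sub_cancel]
  · exact ((hH.1 j).2.1 i (by omega)).symm

theorem padPaths_unpadPaths {P : Fin k → ℕ → ℕ} (hP : P ∈ Aset k n) :
    padPaths n (unpadPaths n P) = P := by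
  funext j i
  have hD := (unpadPaths_mem_bsetN hP).1 j
  simp only [padPaths]
  rcases Nat.lt_or_ge i (2 * (j : ℕ)) with c1 | c1
  · rw [padPath_of_le hD.1 (by omega), Aset.apply_eq_self hP j (by omega)]
  rcases Nat.lt_or_ge i (2 * (j : ℕ) + 2 * n) with c2 | c2
  · have := Aset.two_mul_le hP j (i := i - 2 * (j : ℕ)) (by omega)
    rw [padPath_of_mem_Icc (by omega) (by omega), unpadPaths, if_pos (by omega),
      Nat.sub_add_cancel c1] at *
    omega
  · rw [padPath_of_ge (hD.2.1 _ le_rfl) (by omega), Aset.apply_eq_sub hP j (by omega)]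

theorem bijOn_padPaths : Set.BijOn (padPaths n) (BsetN k n) (Aset k n) :=
  Set.InvOn.bijOn ⟨fun _ => unpadPaths_padPaths, fun _ => padPaths_unpadPaths⟩
    (fun _ => padPaths_mem_aset) (fun _ => unpadPaths_mem_bsetN)

end padPaths

theorem fw_padPath (w : ℕ → ℝ) (n j : ℕ) {h : ℕ → ℕ} (h0 : h 0 = 0)
    (hend : h (2 * n) = 0) :
    fw w (n + 2 * j) (padPath n j h) =
      (∏ m ∈ Finset.range (2 * j), w (m + 1) ^ 2) * fw (fun m => w (m + 2 * j)) n h := by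
  have climb : ∏ i ∈ Finset.range (2 * j), w (max (padPath n j h i) (padPath n j h (i + 1))) =
      ∏ m ∈ Finset.range (2 * j), w (m + 1) := by
    refine Finset.prod_congr rfl fun i hi => ?_
    rw [Finset.mem_range] at hi
    rw [padPath_of_le h0 (by omega), padPath_of_le h0 (by omega), max_eq_right (Nat.le_succ i)]
  have middle : ∏ i ∈ Finset.range (2 * n),
      w (max (padPath n j h (2 * j + i)) (padPath n j h (2 * j + i + 1))) =
        fw (fun m => w (m + 2 * j)) n h := by
    refine Finset.prod_congr rfl fun i hi => ?_
    rw [Finset.mem_range] at hi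
    rw [padPath_of_mem_Icc (by omega) (by omega), padPath_of_mem_Icc (by omega) (by omega),
      Nat.add_sub_cancel_left, show 2 * j + i + 1 - 2 * j = i + 1 by omega, max_add_add_right]
  have descent : ∏ i ∈ Finset.range (2 * j),
      w (max (padPath n j h (2 * j + (2 * n + i))) (padPath n j h (2 * j + (2 * n + i) + 1))) =
        ∏ m ∈ Finset.range (2 * j), w (m + 1) := by
    rw [← Finset.prod_range_reflect (fun m => w (m + 1))]
    refine Finset.prod_congr rfl fun i hi => ?_
    rw [Finset.mem_range] at hi
    rw [padPath_of_ge hend (by omega), padPath_of_ge hend (by omega)]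
    congr 1
    omega
  rw [fw, show 2 * (n + 2 * j) = 2 * j + (2 * n + 2 * j) by ring, Finset.prod_range_add,
    Finset.prod_range_add, climb, middle, descent, Finset.prod_pow]
  ring

theorem stmt11_general (k n : ℕ) (w : ℕ → ℝ) :
    (∑ᶠ P ∈ Aset k n, ∏ j : Fin k, fw w (n + 2 * (j : ℕ)) (P j))
      = (∏ j : Fin k, ∏ m ∈ Finset.range (2 * (j : ℕ)), (w (m + 1)) ^ 2) *
        ∑ᶠ H ∈ BsetN k n, ∏ j : Fin k, fw (fun m => w (m + 2 * (j : ℕ))) n (H j) := by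
  rw [mul_finsum_mem]
  refine (finsum_mem_eq_of_bijOn (padPaths n) bijOn_padPaths fun H hH => ?_).symm
  rw [← Finset.prod_mul_distrib]
  exact Finset.prod_congr rfl fun j _ =>
    (fw_padPath w n j (hH.1 j).1 ((hH.1 j).2.1 _ le_rfl)).symm

/-- The weighted sum over `A_n` equals
`(∏_j ∏_{m=1}^{2j} w(m)^2)` times the weighted sum over `B_n` with shifted
weights `θ^{2j}(w) = (m ↦ w (m + 2j))` (here `j : Fin k` is zero-indexed). -/
theorem stmt11 (k n : ℕ) (hk : 1 ≤ k) (w : ℕ → ℝ) :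
    (∑ᶠ P ∈ Aset k n, ∏ j : Fin k, fw w (n + 2 * (j : ℕ)) (P j))
      = (∏ j : Fin k, ∏ m ∈ Finset.range (2 * (j : ℕ)), (w (m + 1)) ^ 2) *
        ∑ᶠ H ∈ BsetN k n, ∏ j : Fin k, fw (fun m => w (m + 2 * (j : ℕ))) n (H j) :=
  stmt11_general k n w
end

section
/- Fix an integer k ≥ 1, a sequence a : ℕ → ℝ and weights w : ℕ → ℝ (indexed from 1) such that a(n) = a(0) · Σ_{h ∈ D_n} f_w(h) for every n ∈ ℕ, where D_n is the set of Dyck-path height functions of length 2n. Then for every n ∈ ℕ, det((a(n+i+j))_{0 ≤ i,j ≤ k−1}) = a(0)^k · Σ_{(P_1,…,P_k) ∈ A_n} ∏_{j=1}^k f_w(P_j). -/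
/-!
Expanding the determinant by the Leibniz formula and each entry `a (n + σ j + j)` by the
hypothesis writes it as `a 0 ^ k` times a signed sum over pairs `(σ, P)`, where `P j` is a Dyck
path from the source `(-2j, 0)` to the sink `(2n + 2σ(j), 0)`. Exchanging the tails of two
paths at the lexicographically first meeting (first path, then step, then second path) is a
weight-preserving involution on intersecting families that changes the sign of `σ`, so those
terms cancel (Lindström–Gessel–Viennot). A non-intersecting family has `σ = 1`: if `j < j'`
but `σ j' < σ j`, the height difference of the two paths changes sign, is always even and
changes by at most two per step, so it vanishes at some lattice point.
-/

open Finset Equiv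

theorem exists_eq_zero_of_even_of_abs_sub_le_two (g : ℕ → ℤ) {M : ℕ} (h0 : g 0 ≤ 0)
    (hM : 0 ≤ g M) (hstep : ∀ m < M, |g (m + 1) - g m| ≤ 2) (heven : ∀ m ≤ M, Even (g m)) :
    ∃ m ≤ M, g m = 0 := by
  induction M with
  | zero => exact ⟨0, le_rfl, le_antisymm h0 hM⟩
  | succ M ih =>
    by_cases hgM : 0 ≤ g M
    · obtain ⟨m, hm, hgm⟩ := ih hgM (fun m hm => hstep m (by omega)) fun m hm => heven m (by omega)
      exact ⟨m, by omega, hgm⟩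
    · have h1 := abs_le.1 (hstep M (by omega))
      have h2 := Int.even_iff.1 (heven (M + 1) le_rfl)
      exact ⟨M + 1, le_rfl, by omega⟩

theorem Equiv.Perm.exists_inversion_of_ne_one {k : ℕ} {σ : Perm (Fin k)} (hσ : σ ≠ 1) :
    ∃ j j', j < j' ∧ σ j' < σ j := by
  by_contra! hmono
  refine hσ (DFunLike.coe_injective ?_)
  have hσ_mono : StrictMono σ := fun j j' h =>
    (hmono j j' h).lt_of_ne (σ.injective.ne h.ne)
  exact (hσ_mono.range_inj strictMono_id).1 (by simp)

namespace DyckLGV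

section DyckPaths

variable {N : ℕ} {h : ℕ → ℕ}

lemma apply_le_of_mem_dyckN (hh : h ∈ DyckN N) (i : ℕ) : h i ≤ i := by
  induction i with
  | zero => exact hh.1.le
  | succ i ih =>
    rcases le_or_gt (2 * N) i with hi | hi
    · rw [hh.2.1 (i + 1) (by omega)]; omega
    · rcases hh.2.2 i hi with h1 | h1 <;> omega

lemma apply_mod_two_of_mem_dyckN (hh : h ∈ DyckN N) {i : ℕ} (hi : i ≤ 2 * N) :
    h i % 2 = i % 2 := by
  induction i with
  | zero => simp [hh.1]
  | succ i ih => rcases hh.2.2 i (by omega) with h1 | h1 <;> (have := ih (by omega); omega)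

lemma finite_dyckN (N : ℕ) : (DyckN N).Finite := by
  let extend (g : Fin (2 * N + 1) → Fin (2 * N + 1)) (i : ℕ) : ℕ :=
    if hi : i ≤ 2 * N then g ⟨i, by omega⟩ else 0
  refine (Set.finite_range extend).subset fun h hh => ?_
  refine ⟨fun i => ⟨h i, (apply_le_of_mem_dyckN hh i).trans_lt i.2⟩, funext fun i => ?_⟩
  by_cases hi : i ≤ 2 * N
  · simp [extend, hi]
  · simp [extend, hi, hh.2.1 i (by omega)]

noncomputable def dyckFinset (N : ℕ) : Finset (ℕ → ℕ) := (finite_dyckN N).toFinset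

lemma mem_dyckFinset : h ∈ dyckFinset N ↔ h ∈ DyckN N := Set.Finite.mem_toFinset _

end DyckPaths

section Splice

def splice (p : ℕ → ℕ) (s : ℕ) (q : ℕ → ℕ) (s' : ℕ) : ℕ → ℕ :=
  fun t => if t ≤ s then p t else q (t + s' - s)

variable {p q : ℕ → ℕ} {s s' t : ℕ}

lemma splice_of_le (ht : t ≤ s) : splice p s q s' t = p t := if_pos ht

lemma splice_of_lt (ht : s < t) : splice p s q s' t = q (t + s' - s) := if_neg (by omega)

lemma splice_add (heq : p s = q s') (t : ℕ) : splice p s q s' (s + t) = q (s' + t) := by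
  rcases Nat.eq_zero_or_pos t with rfl | ht
  · simpa [splice_of_le] using heq
  · rw [splice_of_lt (by omega)]; congr 1; omega

lemma splice_splice : splice (splice p s q s') s (splice q s' p s) s' = p := by
  funext t
  by_cases ht : t ≤ s
  · rw [splice_of_le ht, splice_of_le ht]
  · rw [splice_of_lt (by omega), splice_of_lt (by omega)]; congr 1; omega

lemma splice_mem_dyckN {N N' M : ℕ} (hp : p ∈ DyckN N) (hq : q ∈ DyckN N') (hs : s ≤ 2 * N)
    (heq : p s = q s') (hM : 2 * M = s + (2 * N' - s')) :
    splice p s q s' ∈ DyckN M := by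
  refine ⟨by simp [splice, hp.1], fun i hi => ?_, fun i hi => ?_⟩
  · obtain ⟨u, rfl⟩ : ∃ u, i = s + u := ⟨i - s, by omega⟩
    rw [splice_add heq]; exact hq.2.1 _ (by omega)
  · by_cases hi' : i < s
    · rw [splice_of_le (by omega), splice_of_le hi'.le]; exact hp.2.2 i (by omega)
    · obtain ⟨u, rfl⟩ : ∃ u, i = s + u := ⟨i - s, by omega⟩
      rw [add_assoc, splice_add heq, splice_add heq, ← add_assoc]; exact hq.2.2 _ (by omega)

end Splice

section Weight

variable (w : ℕ → ℝ)

def stepWeight (h : ℕ → ℕ) (i : ℕ) : ℝ := w (max (h i) (h (i + 1)))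

lemma fw_eq_prod_mul_prod {N s : ℕ} (h : ℕ → ℕ) (hs : s ≤ 2 * N) :
    fw w N h = (∏ i ∈ range s, stepWeight w h i) *
      ∏ i ∈ range (2 * N - s), stepWeight w h (s + i) := by
  rw [← prod_range_add (stepWeight w h), Nat.add_sub_cancel' hs]; rfl

variable {p q : ℕ → ℕ} {s s' : ℕ}

lemma fw_splice {N' M : ℕ} (heq : p s = q s') (hM : 2 * M = s + (2 * N' - s')) :
    fw w M (splice p s q s') = (∏ i ∈ range s, stepWeight w p i) *
      ∏ i ∈ range (2 * N' - s'), stepWeight w q (s' + i) := by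
  rw [fw_eq_prod_mul_prod w _ (s := s) (by omega), show 2 * M - s = 2 * N' - s' by omega]
  congr 1
  · refine prod_congr rfl fun i hi => ?_
    rw [mem_range] at hi
    simp only [stepWeight, splice_of_le hi.le, splice_of_le (Nat.succ_le_of_lt hi)]
  · refine prod_congr rfl fun i _ => ?_
    simp only [stepWeight, add_assoc, splice_add heq]

lemma fw_splice_mul_fw_splice {N N' M M' : ℕ} (hs : s ≤ 2 * N) (hs' : s' ≤ 2 * N')
    (heq : p s = q s') (hM : 2 * M = s + (2 * N' - s')) (hM' : 2 * M' = s' + (2 * N - s)) :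
    fw w M (splice p s q s') * fw w M' (splice q s' p s) = fw w N p * fw w N' q := by
  rw [fw_splice w heq hM, fw_splice w heq.symm hM', fw_eq_prod_mul_prod w p hs,
    fw_eq_prod_mul_prod w q hs']
  ring

end Weight

section Configurations

variable {k : ℕ} (n : ℕ) (σ : Perm (Fin k)) (P : Fin k → ℕ → ℕ)

/-- Path `j` runs from the source `(-2j, 0)` to the sink `(2n + 2σ(j), 0)`. -/
def halfLen (j : Fin k) : ℕ := n + j + σ j

/-- The `t`-th point of path `j` is the lattice point `(t - 2j, P j t)`. -/
def SharePoint (j : Fin k) (t : ℕ) (j' : Fin k) (t' : ℕ) : Prop :=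
  t ≤ 2 * halfLen n σ j ∧ t' ≤ 2 * halfLen n σ j' ∧
    (t : ℤ) - 2 * (j : ℕ) = (t' : ℤ) - 2 * (j' : ℕ) ∧ P j t = P j' t'

def Meets : Fin k × ℕ × Fin k → Prop
  | (j, t, j') => j ≠ j' ∧ ∃ t', SharePoint n σ P j t j' t'

def Intersecting : Prop := ∃ m, Meets n σ P m

def meetingKey (m : Fin k × ℕ × Fin k) : Fin k ×ₗ ℕ ×ₗ Fin k := toLex (m.1, toLex m.2)

def IsFirstMeeting (m : Fin k × ℕ × Fin k) : Prop :=
  Meets n σ P m ∧ ∀ m', Meets n σ P m' → meetingKey m ≤ meetingKey m'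

variable {n σ P}

lemma halfLen_one (n : ℕ) (j : Fin k) : halfLen n 1 j = n + 2 * (j : ℕ) := by
  simp only [halfLen, Perm.one_apply]; omega

lemma SharePoint.symm {j j' : Fin k} {t t' : ℕ} (h : SharePoint n σ P j t j' t') :
    SharePoint n σ P j' t' j t :=
  ⟨h.2.1, h.1, h.2.2.1.symm, h.2.2.2.symm⟩

lemma meetingKey_injective : Function.Injective (meetingKey (k := k)) := by
  intro m m' h
  simpa [meetingKey, Prod.ext_iff] using h

lemma exists_isFirstMeeting (h : Intersecting n σ P) : ∃ m, IsFirstMeeting n σ P m := by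
  obtain ⟨_, ⟨m, hm, rfl⟩, hmin⟩ :=
    wellFounded_lt.has_min (meetingKey '' {m | Meets n σ P m}) (Set.Nonempty.image meetingKey h)
  exact ⟨m, hm, fun m' hm' => not_lt.1 (hmin _ ⟨m', hm', rfl⟩)⟩

lemma IsFirstMeeting.unique {m m' : Fin k × ℕ × Fin k} (hm : IsFirstMeeting n σ P m)
    (hm' : IsFirstMeeting n σ P m') : m = m' :=
  meetingKey_injective ((hm.2 m' hm'.1).antisymm (hm'.2 m hm.1))

lemma IsFirstMeeting.fst_lt {m : Fin k × ℕ × Fin k} (hm : IsFirstMeeting n σ P m) :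
    m.1 < m.2.2 := by
  obtain ⟨j, t, j'⟩ := m
  obtain ⟨⟨hne, t', hshare⟩, hmin⟩ := hm
  have := hmin (j', t', j) ⟨hne.symm, _, hshare.symm⟩
  simp only [meetingKey, Prod.Lex.toLex_le_toLex] at this
  exact this.resolve_right fun h => hne h.1

lemma intersecting_of_lt_of_lt (hP : ∀ j, P j ∈ DyckN (halfLen n σ j)) {j j' : Fin k}
    (hj : j < j') (hσ : σ j' < σ j) : Intersecting n σ P := by
  have hj' : (j : ℕ) < j' := hj
  have hσ' : (σ j' : ℕ) < σ j := hσ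
  set d := 2 * ((j' : ℕ) - j)
  set M := 2 * (n + j + σ j')
  have hlen : 2 * halfLen n σ j' = M + d := by simp only [halfLen, M, d]; omega
  have hlen' : M ≤ 2 * halfLen n σ j := by simp only [halfLen, M]; omega
  obtain ⟨t, ht, hzero⟩ := exists_eq_zero_of_even_of_abs_sub_le_two
    (fun t => (P j t : ℤ) - P j' (t + d)) (M := M)
    (by simp [(hP j).1])
    (by simp [(hP j').2.1 (M + d) hlen.le])
    (fun t ht => by
      have := (hP j).2.2 t (by omega)
      have := (hP j').2.2 (t + d) (by omega)
      rw [abs_le, show t + 1 + d = t + d + 1 by omega]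
      constructor <;> omega)
    (fun t ht => by
      have := apply_mod_two_of_mem_dyckN (hP j) (i := t) (by omega)
      have := apply_mod_two_of_mem_dyckN (hP j') (i := t + d) (by omega)
      rw [Int.even_iff]; omega)
  simp only [sub_eq_zero, Nat.cast_inj] at hzero
  exact ⟨(j, t, j'), hj.ne, t + d, by omega, by omega, by push_cast; omega, by omega⟩

lemma not_intersecting_iff (hP : ∀ j, P j ∈ DyckN (halfLen n σ j)) :
    ¬ Intersecting n σ P ↔ σ = 1 ∧ P ∈ Aset k n := by
  constructor
  · intro hP'
    obtain rfl : σ = 1 := by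
      by_contra hσ
      obtain ⟨j, j', hj, hσj⟩ := Equiv.Perm.exists_inversion_of_ne_one hσ
      exact hP' (intersecting_of_lt_of_lt hP hj hσj)
    refine ⟨rfl, fun j => halfLen_one n j ▸ hP j, fun j j' hne t t' ht ht' hx hv => ?_⟩
    exact hP' ⟨(j, t, j'), hne, t', by rwa [halfLen_one], by rwa [halfLen_one], hx, hv⟩
  · rintro ⟨rfl, -, hA⟩ ⟨⟨j, t, j'⟩, hne, t', ht, ht', hx, hv⟩
    rw [halfLen_one] at ht ht'
    exact hA j j' hne t t' ht ht' hx hv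

end Configurations

section TailSwap

variable {k n : ℕ} {σ : Perm (Fin k)} {P : Fin k → ℕ → ℕ} {j₀ j₁ : Fin k} {t₀ : ℕ}

/-- Point `t₀` of path `j₀` is point `t₀ + 2 j₁ - 2 j₀` of path `j₁`; exchanging the tails there
also exchanges the sinks. -/
def tailSwap (σ : Perm (Fin k)) (P : Fin k → ℕ → ℕ) :
    Fin k × ℕ × Fin k → Perm (Fin k) × (Fin k → ℕ → ℕ)
  | (j₀, t₀, j₁) =>
    let t₁ := t₀ + 2 * (j₁ : ℕ) - 2 * (j₀ : ℕ)
    (σ * swap j₀ j₁, Function.update (Function.update P j₀ (splice (P j₀) t₀ (P j₁) t₁)) j₁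
      (splice (P j₁) t₁ (P j₀) t₀))

lemma tailSwap_fst : (tailSwap σ P (j₀, t₀, j₁)).1 = σ * swap j₀ j₁ := rfl

lemma tailSwap_fst_apply_of_ne {j : Fin k} (h₀ : j ≠ j₀) (h₁ : j ≠ j₁) :
    (tailSwap σ P (j₀, t₀, j₁)).1 j = σ j := by
  simp [tailSwap, swap_apply_of_ne_of_ne h₀ h₁]

lemma tailSwap_snd_apply_of_ne {j : Fin k} (h₀ : j ≠ j₀) (h₁ : j ≠ j₁) :
    (tailSwap σ P (j₀, t₀, j₁)).2 j = P j := by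
  simp [tailSwap, h₀, h₁]

lemma halfLen_tailSwap_of_ne {j : Fin k} (h₀ : j ≠ j₀) (h₁ : j ≠ j₁) :
    halfLen n (tailSwap σ P (j₀, t₀, j₁)).1 j = halfLen n σ j := by
  rw [halfLen, tailSwap_fst_apply_of_ne h₀ h₁, halfLen]

lemma tailSwap_snd_apply_left (hne : j₀ ≠ j₁) :
    (tailSwap σ P (j₀, t₀, j₁)).2 j₀ =
      splice (P j₀) t₀ (P j₁) (t₀ + 2 * (j₁ : ℕ) - 2 * (j₀ : ℕ)) := by
  simp [tailSwap, hne]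

lemma tailSwap_snd_apply_right :
    (tailSwap σ P (j₀, t₀, j₁)).2 j₁ =
      splice (P j₁) (t₀ + 2 * (j₁ : ℕ) - 2 * (j₀ : ℕ)) (P j₀) t₀ := by
  simp [tailSwap]

lemma halfLen_tailSwap_left :
    halfLen n (tailSwap σ P (j₀, t₀, j₁)).1 j₀ = n + j₀ + σ j₁ := by
  simp [halfLen, tailSwap]

lemma halfLen_tailSwap_right :
    halfLen n (tailSwap σ P (j₀, t₀, j₁)).1 j₁ = n + j₁ + σ j₀ := by
  simp [halfLen, tailSwap]

lemma sign_tailSwap_fst (hne : j₀ ≠ j₁) :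
    Perm.sign (tailSwap σ P (j₀, t₀, j₁)).1 = -Perm.sign σ := by
  simp [tailSwap, Perm.sign_swap hne]

lemma tailSwap_tailSwap (hne : j₀ ≠ j₁) :
    tailSwap (tailSwap σ P (j₀, t₀, j₁)).1 (tailSwap σ P (j₀, t₀, j₁)).2 (j₀, t₀, j₁) = (σ, P) := by
  refine Prod.ext (by simp [tailSwap, mul_assoc]) (funext fun j => ?_)
  by_cases h₀ : j = j₀
  · subst h₀
    rw [tailSwap_snd_apply_left hne, tailSwap_snd_apply_left hne, tailSwap_snd_apply_right,
      splice_splice]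
  by_cases h₁ : j = j₁
  · subst h₁
    rw [tailSwap_snd_apply_right, tailSwap_snd_apply_left hne, tailSwap_snd_apply_right,
      splice_splice]
  rw [tailSwap_snd_apply_of_ne h₀ h₁, tailSwap_snd_apply_of_ne h₀ h₁]

lemma Meets.sharePoint (hm : Meets n σ P (j₀, t₀, j₁)) (hlt : j₀ < j₁) :
    SharePoint n σ P j₀ t₀ j₁ (t₀ + 2 * (j₁ : ℕ) - 2 * (j₀ : ℕ)) := by
  obtain ⟨-, t', ht, ht', hx, hv⟩ := hm
  obtain rfl : t' = t₀ + 2 * (j₁ : ℕ) - 2 * (j₀ : ℕ) := by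
    have : (j₀ : ℕ) < j₁ := hlt
    omega
  exact ⟨ht, ht', hx, hv⟩

lemma tailSwap_snd_mem (hP : ∀ j, P j ∈ DyckN (halfLen n σ j)) (hm : Meets n σ P (j₀, t₀, j₁))
    (hlt : j₀ < j₁) (j : Fin k) :
    (tailSwap σ P (j₀, t₀, j₁)).2 j ∈ DyckN (halfLen n (tailSwap σ P (j₀, t₀, j₁)).1 j) := by
  obtain ⟨ht₀, ht₁, -, hv⟩ := hm.sharePoint hlt
  have hlt' : (j₀ : ℕ) < j₁ := hlt
  by_cases h₀ : j = j₀
  · subst h₀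
    rw [tailSwap_snd_apply_left hlt.ne, halfLen_tailSwap_left]
    exact splice_mem_dyckN (hP _) (hP _) ht₀ hv (by simp only [halfLen] at ht₀ ht₁ ⊢; omega)
  by_cases h₁ : j = j₁
  · subst h₁
    rw [tailSwap_snd_apply_right, halfLen_tailSwap_right]
    exact splice_mem_dyckN (hP _) (hP _) ht₁ hv.symm
      (by simp only [halfLen] at ht₀ ht₁ ⊢; omega)
  rw [tailSwap_snd_apply_of_ne h₀ h₁, halfLen_tailSwap_of_ne h₀ h₁]
  exact hP j

def familyWeight (w : ℕ → ℝ) (n : ℕ) (σ : Perm (Fin k)) (P : Fin k → ℕ → ℕ) : ℝ :=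
  ∏ j, fw w (halfLen n σ j) (P j)

lemma familyWeight_tailSwap (w : ℕ → ℝ) (hm : Meets n σ P (j₀, t₀, j₁)) (hlt : j₀ < j₁) :
    familyWeight w n (tailSwap σ P (j₀, t₀, j₁)).1 (tailSwap σ P (j₀, t₀, j₁)).2 =
      familyWeight w n σ P := by
  obtain ⟨ht₀, ht₁, -, hv⟩ := hm.sharePoint hlt
  have hlt' : (j₀ : ℕ) < j₁ := hlt
  unfold familyWeight
  rw [← prod_mul_prod_compl {j₀, j₁}, ← prod_mul_prod_compl {j₀, j₁} fun j => _,
    prod_pair hlt.ne, prod_pair hlt.ne, tailSwap_snd_apply_left hlt.ne, tailSwap_snd_apply_right,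
    halfLen_tailSwap_left, halfLen_tailSwap_right, fw_splice_mul_fw_splice w ht₀ ht₁ hv
      (by simp only [halfLen] at ht₀ ht₁ ⊢; omega) (by simp only [halfLen] at ht₀ ht₁ ⊢; omega)]
  congr 1
  refine prod_congr rfl fun j hj => ?_
  simp only [mem_compl, mem_insert, mem_singleton, not_or] at hj
  rw [tailSwap_snd_apply_of_ne hj.1 hj.2, halfLen_tailSwap_of_ne hj.1 hj.2]

lemma exists_sharePoint_of_tailSwap (hm : Meets n σ P (j₀, t₀, j₁)) (hlt : j₀ < j₁) {j : Fin k}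
    {t : ℕ} (ht : t ≤ 2 * halfLen n (tailSwap σ P (j₀, t₀, j₁)).1 j) :
    ∃ j'' t'', (j'' = j ∨ j'' = j₀ ∨ j'' = j₁) ∧ t'' ≤ 2 * halfLen n σ j'' ∧
      (t'' : ℤ) - 2 * (j'' : ℕ) = (t : ℤ) - 2 * (j : ℕ) ∧
      P j'' t'' = (tailSwap σ P (j₀, t₀, j₁)).2 j t := by
  obtain ⟨ht₀, ht₁, -, -⟩ := hm.sharePoint hlt
  have hlt' : (j₀ : ℕ) < j₁ := hlt
  by_cases h₀ : j = j₀
  · subst h₀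
    rw [halfLen_tailSwap_left] at ht
    rw [tailSwap_snd_apply_left hlt.ne]
    by_cases hts : t ≤ t₀
    · exact ⟨j, t, .inl rfl, by omega, rfl, (splice_of_le hts).symm⟩
    · refine ⟨j₁, t + 2 * (j₁ : ℕ) - 2 * (j : ℕ), .inr (.inr rfl), ?_, ?_, ?_⟩
      · simp only [halfLen] at ht₁ ht ⊢; omega
      · omega
      · rw [splice_of_lt (by omega)]; congr 1; omega
  by_cases h₁ : j = j₁
  · subst h₁
    rw [halfLen_tailSwap_right] at ht
    rw [tailSwap_snd_apply_right]
    by_cases hts : t ≤ t₀ + 2 * (j : ℕ) - 2 * (j₀ : ℕ)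
    · exact ⟨j, t, .inl rfl, by omega, rfl, (splice_of_le hts).symm⟩
    · refine ⟨j₀, t + 2 * (j₀ : ℕ) - 2 * (j : ℕ), .inr (.inl rfl), ?_, ?_, ?_⟩
      · simp only [halfLen] at ht₀ ht ⊢; omega
      · omega
      · rw [splice_of_lt (by omega)]; congr 1; omega
  exact ⟨j, t, .inl rfl, halfLen_tailSwap_of_ne h₀ h₁ ▸ ht, rfl,
    by rw [tailSwap_snd_apply_of_ne h₀ h₁]⟩

/-- A meeting of the swapped family that precedes `(j₀, t₀, j₁)` would be, up to the choice of
the second path, an earlier meeting of the original family. -/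
lemma IsFirstMeeting.tailSwap (hm : IsFirstMeeting n σ P (j₀, t₀, j₁)) :
    IsFirstMeeting n (tailSwap σ P (j₀, t₀, j₁)).1 (tailSwap σ P (j₀, t₀, j₁)).2 (j₀, t₀, j₁) := by
  have hlt : j₀ < j₁ := hm.fst_lt
  have hlt' : (j₀ : ℕ) < j₁ := hlt
  obtain ⟨ht₀, ht₁, hx, hv⟩ := hm.1.sharePoint hlt
  refine ⟨⟨hlt.ne, _, ?_, ?_, hx, ?_⟩, fun ⟨j, t, j'⟩ ⟨hne, t', ht, ht', hx', hv'⟩ => ?_⟩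
  · rw [halfLen_tailSwap_left]; simp only [halfLen] at ht₁; omega
  · rw [halfLen_tailSwap_right]; simp only [halfLen] at ht₀; omega
  · rw [tailSwap_snd_apply_left hlt.ne, tailSwap_snd_apply_right, splice_of_le le_rfl,
      splice_of_le le_rfl, hv]
  by_contra hkey
  suffices ∃ m, Meets n σ P m ∧ meetingKey m < meetingKey (j₀, t₀, j₁) from
    let ⟨m, hm', hkey'⟩ := this; (hm.2 m hm').not_gt hkey'
  simp only [not_le, meetingKey, Prod.Lex.toLex_lt_toLex] at hkey
  rcases hkey with hj | ⟨rfl, hkey⟩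
  · have h₀ : j ≠ j₀ := hj.ne
    have h₁ : j ≠ j₁ := (hj.trans hlt).ne
    rw [halfLen_tailSwap_of_ne h₀ h₁] at ht
    rw [tailSwap_snd_apply_of_ne h₀ h₁] at hv'
    obtain ⟨j'', t'', hj'', ht'', hx'', hv''⟩ := exists_sharePoint_of_tailSwap hm.1 hlt ht'
    refine ⟨(j, t, j''), ⟨?_, t'', ht, ht'', by omega, hv'.trans hv''.symm⟩, ?_⟩
    · rintro rfl
      rcases hj'' with h | h | h
      exacts [hne h, h₀ h, h₁ h]
    · simp [meetingKey, Prod.Lex.toLex_lt_toLex, hj]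
  · have htt₀ : t ≤ t₀ := by rcases hkey with h | h <;> omega
    rw [tailSwap_snd_apply_left hlt.ne, splice_of_le htt₀] at hv'
    refine ⟨(j, t, j'), ⟨hne, t', by omega, ?_⟩, by simpa [meetingKey, Prod.Lex.toLex_lt_toLex]⟩
    by_cases h₁ : j' = j₁
    · subst h₁
      rw [tailSwap_snd_apply_right, splice_of_le (by omega)] at hv'
      exact ⟨by omega, by omega, hv'⟩
    · rw [halfLen_tailSwap_of_ne (Ne.symm hne) h₁] at ht'
      rw [tailSwap_snd_apply_of_ne (Ne.symm hne) h₁] at hv'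
      exact ⟨ht', hx', hv'⟩

end TailSwap

section Cancellation

open scoped Classical

variable {k : ℕ} (n : ℕ)

noncomputable def families (σ : Perm (Fin k)) : Finset (Fin k → ℕ → ℕ) :=
  Fintype.piFinset fun j => dyckFinset (halfLen n σ j)

noncomputable def configurations : Finset (Perm (Fin k) × (Fin k → ℕ → ℕ)) :=
  univ.biUnion fun σ => (families n σ).map ⟨Prod.mk σ, Prod.mk_right_injective σ⟩

variable {n}

lemma mem_families {σ : Perm (Fin k)} {P : Fin k → ℕ → ℕ} :
    P ∈ families n σ ↔ ∀ j, P j ∈ DyckN (halfLen n σ j) := by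
  simp only [families, Fintype.mem_piFinset, mem_dyckFinset]

lemma mem_configurations {c : Perm (Fin k) × (Fin k → ℕ → ℕ)} :
    c ∈ configurations n ↔ c.2 ∈ families n c.1 := by
  constructor
  · simp only [configurations, mem_biUnion, mem_map, Function.Embedding.coeFn_mk]
    rintro ⟨σ, -, P, hP, rfl⟩
    exact hP
  · intro hc
    simp only [configurations, mem_biUnion, mem_map, Function.Embedding.coeFn_mk]
    exact ⟨c.1, mem_univ _, c.2, hc, rfl⟩

variable (n) in
noncomputable def switchAtFirstMeeting (c : Perm (Fin k) × (Fin k → ℕ → ℕ)) :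
    Perm (Fin k) × (Fin k → ℕ → ℕ) :=
  if h : Intersecting n c.1 c.2 then tailSwap c.1 c.2 (exists_isFirstMeeting h).choose else c

lemma switchAtFirstMeeting_eq {c : Perm (Fin k) × (Fin k → ℕ → ℕ)} {m : Fin k × ℕ × Fin k}
    (hm : IsFirstMeeting n c.1 c.2 m) : switchAtFirstMeeting n c = tailSwap c.1 c.2 m := by
  have h : Intersecting n c.1 c.2 := ⟨m, hm.1⟩
  rw [switchAtFirstMeeting, dif_pos h, (exists_isFirstMeeting h).choose_spec.unique hm]

lemma sum_sign_mul_familyWeight_filter_intersecting_eq_zero (w : ℕ → ℝ) :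
    ∑ c ∈ (configurations (k := k) n).filter (fun c => Intersecting n c.1 c.2),
      (Perm.sign c.1 : ℝ) * familyWeight w n c.1 c.2 = 0 := by
  refine sum_involution (fun c _ => switchAtFirstMeeting n c) (fun c hc => ?_) (fun c hc _ => ?_)
    (fun c hc => ?_) (fun c hc => ?_)
  all_goals
    obtain ⟨hc, hI⟩ := mem_filter.1 hc
    obtain ⟨⟨j₀, t₀, j₁⟩, hm⟩ := exists_isFirstMeeting hI
    have hlt : j₀ < j₁ := hm.fst_lt
    rw [switchAtFirstMeeting_eq hm]
  · rw [sign_tailSwap_fst hlt.ne, familyWeight_tailSwap w hm.1 hlt]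
    push_cast
    ring
  · intro h
    have h₁ : c.1 * swap j₀ j₁ = c.1 * 1 := by rw [mul_one, ← tailSwap_fst (P := c.2) (t₀ := t₀), h]
    exact hlt.ne (swap_eq_one_iff.1 (mul_left_cancel h₁))
  · refine mem_filter.2 ⟨mem_configurations.2 (mem_families.2 fun j => ?_), _, hm.tailSwap.1⟩
    exact tailSwap_snd_mem (mem_families.1 (mem_configurations.1 hc)) hm.1 hlt j
  · rw [switchAtFirstMeeting_eq hm.tailSwap, tailSwap_tailSwap hlt.ne]

lemma filter_not_intersecting_configurations :
    (configurations (k := k) n).filter (fun c => ¬ Intersecting n c.1 c.2) =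
      ((families n 1).filter fun P => ¬ Intersecting n 1 P).map
        ⟨Prod.mk 1, Prod.mk_right_injective 1⟩ := by
  ext ⟨σ, P⟩
  simp only [mem_filter, mem_configurations, mem_map, Function.Embedding.coeFn_mk, Prod.mk.injEq]
  constructor
  · rintro ⟨hP, hI⟩
    obtain ⟨rfl, -⟩ := (not_intersecting_iff (mem_families.1 hP)).1 hI
    exact ⟨P, ⟨hP, hI⟩, rfl, rfl⟩
  · rintro ⟨P, hP, rfl, rfl⟩
    exact hP

lemma coe_filter_not_intersecting_families_one :
    (((families n 1).filter fun P => ¬ Intersecting n 1 P : Finset (Fin k → ℕ → ℕ)) :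
      Set (Fin k → ℕ → ℕ)) = Aset k n := by
  ext P
  simp only [coe_filter, Set.mem_ofPred_eq]
  constructor
  · rintro ⟨hP, hI⟩
    exact ((not_intersecting_iff (mem_families.1 hP)).1 hI).2
  · intro hA
    have hP : P ∈ families n 1 := mem_families.2 fun j => halfLen_one n j ▸ hA.1 j
    exact ⟨hP, (not_intersecting_iff (mem_families.1 hP)).2 ⟨rfl, hA⟩⟩

lemma sum_sign_mul_sum_familyWeight_eq_sum_not_intersecting (w : ℕ → ℝ) :
    ∑ σ : Perm (Fin k), (Perm.sign σ : ℝ) * ∑ P ∈ families n σ, familyWeight w n σ P =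
      ∑ P ∈ (families (k := k) n 1).filter (fun P => ¬ Intersecting n 1 P),
        familyWeight w n 1 P := by
  simp_rw [mul_sum]
  rw [← sum_finset_product' (configurations n) univ (families n)
      (fun c => by simp [mem_configurations]),
    ← sum_filter_add_sum_filter_not _ fun c => Intersecting n c.1 c.2,
    sum_sign_mul_familyWeight_filter_intersecting_eq_zero, zero_add,
    filter_not_intersecting_configurations, sum_map]
  simp

end Cancellation

lemma det_hankel_eq_signed_sum_familyWeight {k : ℕ} (a w : ℕ → ℝ)
    (ha : ∀ m, a m = a 0 * ∑ h ∈ dyckFinset m, fw w m h) (n : ℕ) :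
    Matrix.det (Matrix.of fun i j : Fin k => a (n + (i : ℕ) + (j : ℕ))) =
      a 0 ^ k *
        ∑ σ : Perm (Fin k), (Perm.sign σ : ℝ) * ∑ P ∈ families n σ, familyWeight w n σ P := by
  rw [Matrix.det_apply', mul_sum]
  refine sum_congr rfl fun σ _ => ?_
  have hentry : ∀ j, Matrix.of (fun i j : Fin k => a (n + (i : ℕ) + (j : ℕ))) (σ j) j =
      a 0 * ∑ h ∈ dyckFinset (halfLen n σ j), fw w (halfLen n σ j) h := fun j => by
    rw [Matrix.of_apply, ← ha, halfLen, add_right_comm]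
  rw [prod_congr rfl fun j _ => hentry j, prod_mul_distrib, prod_const, card_univ, Fintype.card_fin,
    prod_univ_sum]
  simp only [families, familyWeight]
  ring

end DyckLGV

open DyckLGV in
theorem stmt12_general (k : ℕ) (a : ℕ → ℝ) (w : ℕ → ℝ)
    (ha : ∀ n : ℕ, a n = a 0 * ∑ᶠ h ∈ DyckN n, fw w n h) :
    ∀ n : ℕ,
      Matrix.det (Matrix.of fun i j : Fin k => a (n + (i : ℕ) + (j : ℕ)))
        = a 0 ^ k * ∑ᶠ P ∈ Aset k n, ∏ j : Fin k, fw w (n + 2 * (j : ℕ)) (P j) := by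
  intro n
  have ha' : ∀ m, a m = a 0 * ∑ h ∈ dyckFinset m, fw w m h := fun m => by
    rw [ha m, ← finsum_mem_coe_finset, dyckFinset, Set.Finite.coe_toFinset]
  rw [det_hankel_eq_signed_sum_familyWeight a w ha' n,
    sum_sign_mul_sum_familyWeight_eq_sum_not_intersecting,
    ← coe_filter_not_intersecting_families_one, finsum_mem_coe_finset]
  simp only [familyWeight, halfLen_one]

/-- If `a n = a 0 * Σ_{h ∈ D_n} f_w(h)` for all `n`, then the Hankel-type
determinant `det (a (n+i+j))` equals `a 0 ^ k` times the weighted sum over the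
`k`-tuples of non-intersecting Dyck paths in `A_n`
(Lindström–Gessel–Viennot). -/
theorem stmt12 (k : ℕ) (hk : 1 ≤ k) (a : ℕ → ℝ) (w : ℕ → ℝ)
    (ha : ∀ n : ℕ, a n = a 0 * ∑ᶠ h ∈ DyckN n, fw w n h) :
    ∀ n : ℕ,
      Matrix.det (Matrix.of fun i j : Fin k => a (n + (i : ℕ) + (j : ℕ)))
        = a 0 ^ k * ∑ᶠ P ∈ Aset k n, ∏ j : Fin k, fw w (n + 2 * (j : ℕ)) (P j) :=
  stmt12_general k a w ha
end
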